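/- arXiv:1612.06332 — 3 statements merged into one kernel-verified Lean document; each statement's English description precedes it below -/
import Mathlib

section
/- Let H be a supporting hyperplane of a polytope X. Then X ∩ H is a facet of X if and only if C_v(X) ∩ H is a facet of the tangent cone C_v(X) for every vertex v of X lying on H. -/
open Set Finset

/-- A polytope: convex hull of finitely many points. -/
def IsPolytope {n : ℕ} (X : Set (Fin n → ℝ)) : Prop :=
  ∃ V : Finset (Fin n → ℝ), X = convexHull ℝ (V : Set (Fin n → ℝ))

/-- Affine dimension of a set. -/
noncomputable def adim {n : ℕ} (S : Set (Fin n → ℝ)) : ℕ :=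
  Module.finrank ℝ (vectorSpan ℝ S)

/-- `F` is a facet of `X`: an exposed face of affine dimension one less than `X`. -/
def IsFacet {n : ℕ} (X F : Set (Fin n → ℝ)) : Prop :=
  IsExposed ℝ X F ∧ adim F + 1 = adim X

/-- Two vertices of `X` are adjacent if the segment joining them is an exposed face. -/
def AdjVert {n : ℕ} (X : Set (Fin n → ℝ)) (u v : Fin n → ℝ) : Prop :=
  u ≠ v ∧ u ∈ X.extremePoints ℝ ∧ v ∈ X.extremePoints ℝ ∧
    IsExposed ℝ X (segment ℝ u v)

/-- The convex cone generated by a set: all nonnegative multiples of convex combinations. -/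
def coneHull {n : ℕ} (S : Set (Fin n → ℝ)) : Set (Fin n → ℝ) :=
  {0} ∪ {p | ∃ c : ℝ, 0 ≤ c ∧ ∃ z ∈ convexHull ℝ S, p = c • z}

/-- The tangent cone of `X` at a vertex `v`:
`v + cone{x - v : x an adjacent vertex of v}`. -/
def tangentCone {n : ℕ} (X : Set (Fin n → ℝ)) (v : Fin n → ℝ) : Set (Fin n → ℝ) :=
  {p | ∃ y ∈ coneHull {z | ∃ x, AdjVert X v x ∧ z = x - v}, p = v + y}

/-- The graph (1-skeleton) of a polytope `X`, with the vertices of `X` as nodes. -/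
def polyGraph {n : ℕ} (X : Set (Fin n → ℝ)) : SimpleGraph (Fin n → ℝ) where
  Adj := AdjVert X
  symm := by
    constructor
    intro u v h
    refine ⟨h.1.symm, h.2.2.1, h.2.1, ?_⟩
    rw [segment_symm]; exact h.2.2.2
  loopless := by constructor; intro u h; exact h.1 rfl

/-- Real point corresponding to an integer point. -/
def toR {d : ℕ} (x : Fin d → ℤ) : Fin d → ℝ := fun i => (x i : ℝ)

/-- Lexicographic order comparing from the last coordinate. -/
def lexLe {d : ℕ} (x y : Fin d → ℤ) : Prop :=
  x = y ∨ ∃ i : Fin d, x i < y i ∧ ∀ k : Fin d, i < k → x k = y k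

/-- Graded lexicographic order. -/
def grlexLe {d : ℕ} (x y : Fin d → ℤ) : Prop :=
  (∑ i, x i) < (∑ i, y i) ∨ ((∑ i, x i) = (∑ i, y i) ∧ lexLe x y)

/-- Graded reverse lexicographic order. -/
def grevlexLe {d : ℕ} (x y : Fin d → ℤ) : Prop :=
  (∑ i, x i) < (∑ i, y i) ∨ ((∑ i, x i) = (∑ i, y i) ∧ lexLe y x)

/-- The grlex polytope `P = conv{x ∈ ℤᵈ : 0 ≤ x ≼_grlex θ}`. -/
def grlexP (d : ℕ) (θ : Fin d → ℤ) : Set (Fin d → ℝ) :=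
  convexHull ℝ {p | ∃ x : Fin d → ℤ, (∀ i, 0 ≤ x i) ∧ grlexLe x θ ∧ p = toR x}

/-- The grevlex polytope `Q = conv{x ∈ ℤᵈ : 0 ≤ x ≼_grevlex θ}`. -/
def grevlexQ (d : ℕ) (θ : Fin d → ℤ) : Set (Fin d → ℝ) :=
  convexHull ℝ {p | ∃ x : Fin d → ℤ, (∀ i, 0 ≤ x i) ∧ grevlexLe x θ ∧ p = toR x}

/-- `b`, the total sum of `θ`. -/
def bsum {d : ℕ} (θ : Fin d → ℤ) : ℤ := ∑ i, θ i

/-- `b̃ₖ`, the sum of the first `k` coordinates of `θ` (`k` is 1-indexed). -/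
def btil {d : ℕ} (θ : Fin d → ℤ) (k : ℕ) : ℤ :=
  ∑ i ∈ Finset.univ.filter (fun i : Fin d => (i : ℕ) < k), θ i

/-- The vertex `w = (b-1)e_d` of `P`. -/
def wP (d : ℕ) (θ : Fin d → ℤ) : Fin d → ℤ :=
  fun i => if (i : ℕ) = d - 1 then bsum θ - 1 else 0

/-- The vertex `u^k = ((b̃_{k-1}+1)e_{k-1}, θ_k - 1, θ_{k+1}, …, θ_d)` of `P` (paper's
1-indexing: coordinate `j` of the paper is index `j-1` here). -/
def uP (d : ℕ) (θ : Fin d → ℤ) (k : ℕ) : Fin d → ℤ :=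
  fun i => if (i : ℕ) = k - 2 then btil θ (k - 1) + 1
    else if (i : ℕ) = k - 1 then θ i - 1
    else if k ≤ (i : ℕ) then θ i else 0

/-- The vertex `v^{j,k} = (b̃_k e_j, 0, …, 0, θ_{k+1}, …, θ_d)` of `P` (1-indexed). -/
def vP (d : ℕ) (θ : Fin d → ℤ) (j k : ℕ) : Fin d → ℤ :=
  fun i => if (i : ℕ) = j - 1 then btil θ k
    else if k ≤ (i : ℕ) then θ i else 0

/-- The point `b·e_j` (1-indexed `j`). -/
def beP (d : ℕ) (θ : Fin d → ℤ) (j : ℕ) : Fin d → ℤ :=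
  fun i => if (i : ℕ) = j - 1 then bsum θ else 0

/-- The vertex `u^k = (b̃_{k-1}e_{k-1}, θ_k, …, θ_d)` of `Q` (1-indexed, `2 ≤ k ≤ d+1`). -/
def uQ (d : ℕ) (θ : Fin d → ℤ) (k : ℕ) : Fin d → ℤ :=
  fun i => if (i : ℕ) = k - 2 then btil θ (k - 1)
    else if k - 1 ≤ (i : ℕ) then θ i else 0

/-- The vertex `v^{j,k} = ((b̃_{k-1}-1)e_j, 0, …, 0, θ_k + 1, θ_{k+1}, …, θ_d)` of `Q`. -/
def vQ (d : ℕ) (θ : Fin d → ℤ) (j k : ℕ) : Fin d → ℤ :=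
  fun i => if (i : ℕ) = j - 1 then btil θ (k - 1) - 1
    else if (i : ℕ) = k - 1 then θ i + 1
    else if k ≤ (i : ℕ) then θ i else 0

/-- Edge boundary of a vertex set in a graph. -/
def eboundary {V : Type*} (G : SimpleGraph V) (S : Set V) : Set (V × V) :=
  {p | G.Adj p.1 p.2 ∧ p.1 ∈ S ∧ p.2 ∉ S}

/-!
Every polytope `X` lies in its tangent cone `C_v(X)` at each vertex `v`. To see this, take a
functional `f` exposing `v` and project the other vertices radially from `v` onto the hyperplane
`f = f v - 1`. A vertex `q` of the convex hull `Y` of these projections is exposed in `Y` by some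
`h`; tilting `h` by a multiple of `f` gives a functional exposing the segment from `v` to the vertex
of `X` behind `q`, which is therefore an edge. Hence `Y`, and with it `X`, lies in `v` plus the cone
of edge directions.

Consequently `C_v(X)` and `X` have the same affine span and, for `v ∈ H`, so have `C_v(X) ∩ H` and
`X ∩ H`: an element of the cone on which the supporting functional vanishes is generated by edges
lying in `H`. Both intersections are exposed, since `H` supports `C_v(X)` as well, so the two
facet conditions agree; the converse direction needs one vertex on `H`, which exists because
`X ∩ H` is a nonempty face.
-/

section LinearGeometry

variable {E : Type*} [AddCommGroup E] [Module ℝ E]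

theorem mem_convexHull_setOf_map_eq_of_map_eq (f : E →ₗ[ℝ] ℝ) {S : Set E} {a : ℝ} {x : E}
    (hS : ∀ s ∈ S, f s ≤ a) (hx : x ∈ convexHull ℝ S) (hfx : f x = a) :
    x ∈ convexHull ℝ {s ∈ S | f s = a} := by
  set T := {s ∈ S | f s = a}
  set U := {s ∈ S | f s < a}
  have hU : ∀ w ∈ convexHull ℝ U, f w < a :=
    fun w hw => convexHull_min (fun s hs => hs.2) (convex_halfSpace_lt f.isLinear a) hw
  have hSTU : S = T ∪ U := by
    ext s
    simp only [T, U, mem_union, mem_ofPred_eq, ← and_or_left]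
    exact ⟨fun h => ⟨h, (hS s h).eq_or_lt⟩, And.left⟩
  rcases T.eq_empty_or_nonempty with hTe | hT
  · rw [hSTU, hTe, empty_union] at hx
    exact absurd hfx (hU x hx).ne
  rcases U.eq_empty_or_nonempty with hUe | hUne
  · rwa [hSTU, hUe, union_empty] at hx
  rw [hSTU, convexHull_union hT hUne] at hx
  obtain ⟨t, ht, w, hw, α, β, -, -, hαβ, rfl⟩ := mem_convexJoin.1 hx
  have hft : f t = a :=
    convexHull_min (fun s hs => hs.2) (convex_hyperplane f.isLinear a) ht
  have hβ : β * (a - f w) = 0 := by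
    rw [map_add, map_smul, map_smul, smul_eq_mul, smul_eq_mul, hft] at hfx
    linear_combination a * hαβ - hfx
  obtain rfl : β = 0 := (mul_eq_zero.1 hβ).resolve_right (sub_pos.2 (hU w hw)).ne'
  rwa [zero_smul, add_zero, show α = 1 by linarith, one_smul]

theorem eq_of_mem_extremePoints_of_sub_eq_smul {X : Set E} {v s u : E} (hv : v ∈ X)
    (hs : s ∈ X.extremePoints ℝ) (hu : u ∈ X.extremePoints ℝ) (hsv : s ≠ v) (huv : u ≠ v)
    {r : ℝ} (hr : 0 < r) (h : s - v = r • (u - v)) : s = u := by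
  rcases le_total r 1 with hr1 | hr1
  · have hseg : s ∈ segment ℝ v u :=
      ⟨1 - r, r, by linarith, hr.le, by ring, by rw [sub_eq_iff_eq_add'.1 h]; module⟩
    exact ((mem_extremePoints_iff_forall_segment.1 hs).2 v hv u hu.1 hseg).resolve_left
      hsv.symm |>.symm
  · have h' : u - v = r⁻¹ • (s - v) := by rw [h, smul_smul, inv_mul_cancel₀ hr.ne', one_smul]
    have hseg : u ∈ segment ℝ v s :=
      ⟨1 - r⁻¹, r⁻¹, by linarith [inv_le_one_of_one_le₀ hr1], (inv_pos.2 hr).le, by ring,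
        by rw [sub_eq_iff_eq_add'.1 h']; module⟩
    exact ((mem_extremePoints_iff_forall_segment.1 hu).2 v hv s hs.1 hseg).resolve_left huv.symm

/-- The point where the ray from `v` through `s` meets the level set `f = f v - 1`. -/
noncomputable def radialProj (f : E → ℝ) (v s : E) : E := v + (f v - f s)⁻¹ • (s - v)

theorem map_radialProj {F : Type*} [FunLike F E ℝ] [LinearMapClass F ℝ E ℝ] (g : F) (f : E → ℝ)
    (v s : E) : g (radialProj f v s) = g v + (f v - f s)⁻¹ * (g s - g v) := by
  rw [radialProj, map_add, map_smul, map_sub, smul_eq_mul]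

theorem sub_eq_smul_radialProj_sub (f : E → ℝ) {v s : E} (h : f s ≠ f v) :
    s - v = (f v - f s) • (radialProj f v s - v) := by
  rw [radialProj, add_sub_cancel_left, smul_smul, mul_inv_cancel₀ (sub_ne_zero.2 h.symm),
    one_smul]

theorem radialProj_injOn (f : E → ℝ) {X : Set E} {v : E} (hv : v ∈ X)
    (hf : ∀ s ∈ X.extremePoints ℝ, s ≠ v → f s < f v) :
    InjOn (radialProj f v) (X.extremePoints ℝ \ {v}) := by
  intro s hs u hu h
  have hs0 := sub_pos.2 (hf s hs.1 hs.2)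
  have hu0 := sub_pos.2 (hf u hu.1 hu.2)
  refine eq_of_mem_extremePoints_of_sub_eq_smul hv hs.1 hu.1 hs.2 hu.2 (div_pos hs0 hu0) ?_
  have h' := congrArg ((f v - f s) • ·) (add_left_cancel h)
  simp only [smul_smul, mul_inv_cancel₀ hs0.ne', one_smul] at h'
  rw [h', div_eq_mul_inv]

end LinearGeometry

section TopologicalGeometry

variable {E : Type*} [NormedAddCommGroup E] [NormedSpace ℝ E]

theorem ContinuousLinearMap.toExposed_convexHull (l : E →L[ℝ] ℝ) {S : Set E} {v : E}
    (hv : v ∈ S) (hS : ∀ s ∈ S, l s ≤ l v) :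
    l.toExposed (convexHull ℝ S) = convexHull ℝ {s ∈ S | l s = l v} := by
  have hle : ∀ y ∈ convexHull ℝ S, l y ≤ l v :=
    fun y hy => convexHull_min hS (convex_halfSpace_le l.toLinearMap.isLinear (l v)) hy
  ext x
  constructor
  · rintro ⟨hx, hxmax⟩
    exact mem_convexHull_setOf_map_eq_of_map_eq l.toLinearMap hS hx
      (le_antisymm (hle x hx) (hxmax v (subset_convexHull ℝ S hv)))
  · intro hx
    have hlx : l x = l v :=
      convexHull_min (fun s hs => hs.2) (convex_hyperplane l.toLinearMap.isLinear (l v)) hx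
    exact ⟨convexHull_mono (fun s hs => hs.1) hx, fun y hy => hlx ▸ hle y hy⟩

theorem isExposed_inter_setOf_eq (l : E →L[ℝ] ℝ) {A : Set E} {a : ℝ} (hA : ∀ x ∈ A, l x ≤ a) :
    IsExposed ℝ A (A ∩ {x | l x = a}) := by
  rintro ⟨x₀, hx₀, hlx₀⟩
  refine ⟨l, Subset.antisymm (fun x hx => ⟨hx.1, fun y hy => (hA y hy).trans hx.2.ge⟩)
    fun x hx => ⟨hx.1, (hA x hx.1).antisymm ?_⟩⟩
  rw [← hlx₀]
  exact hx.2 x₀ hx₀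

theorem Set.Finite.extremePoints_convexHull_subset_exposedPoints {S : Set E} (hS : S.Finite) :
    (convexHull ℝ S).extremePoints ℝ ⊆ (convexHull ℝ S).exposedPoints ℝ := by
  intro q hq
  have hqS : q ∈ S := extremePoints_convexHull_subset hq
  have hq' : q ∉ convexHull ℝ (S \ {q}) := fun h =>
    ((convex_convexHull ℝ S).mem_extremePoints_iff_mem_sdiff_convexHull_sdiff.1 hq).2
      (convexHull_mono (sdiff_subset_sdiff_left (subset_convexHull ℝ S)) h)
  obtain ⟨l, u, hlu, hu⟩ := geometric_hahn_banach_closed_point (convex_convexHull ℝ _)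
    (hS.sdiff.isCompact_convexHull ℝ).isClosed hq'
  have hlt : ∀ s ∈ S, s ≠ q → l s < l q :=
    fun s hs hsq => (hlu s (subset_convexHull ℝ _ ⟨hs, hsq⟩)).trans hu
  have hface : {s ∈ S | l s = l q} = {q} := by
    ext s
    refine ⟨fun ⟨hs, hls⟩ => by_contra fun hsq => (hlt s hs hsq).ne hls, ?_⟩
    rintro rfl
    exact ⟨hqS, rfl⟩
  have hexp := l.toExposed_convexHull hqS fun s hs =>
    (eq_or_ne s q).elim (fun h => h ▸ le_rfl) fun h => (hlt s hs h).le
  rw [hface, convexHull_singleton] at hexp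
  have hqexp : q ∈ l.toExposed (convexHull ℝ S) := by
    rw [hexp]
    exact mem_singleton q
  have hmax : ∀ y ∈ convexHull ℝ S, l y ≤ l q := hqexp.2
  refine ⟨hq.1, l, fun y hy => ⟨hmax y hy, fun hqy => ?_⟩⟩
  have : y ∈ l.toExposed (convexHull ℝ S) := ⟨hy, fun z hz => (hmax z hz).trans hqy⟩
  rwa [hexp] at this

theorem Set.Finite.convexHull_extremePoints_convexHull {S : Set E} (hS : S.Finite) :
    convexHull ℝ ((convexHull ℝ S).extremePoints ℝ) = convexHull ℝ S := by
  rw [← ((hS.subset extremePoints_convexHull_subset).isCompact_convexHull ℝ).isClosed.closure_eq]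
  exact closure_convexHull_extremePoints (hS.isCompact_convexHull ℝ) (convex_convexHull ℝ S)

theorem exists_isExposed_segment_of_mem_extremePoints_convexHull_radialProj {X : Set E}
    (hfin : (X.extremePoints ℝ).Finite) (hX : convexHull ℝ (X.extremePoints ℝ) = X) {v : E}
    (hv : v ∈ X.extremePoints ℝ) (f : E →L[ℝ] ℝ) (hf : ∀ s ∈ X.extremePoints ℝ, s ≠ v → f s < f v)
    {q : E}
    (hq : q ∈ (convexHull ℝ (radialProj f v '' (X.extremePoints ℝ \ {v}))).extremePoints ℝ) :
    ∃ u ∈ X.extremePoints ℝ \ {v}, q = radialProj f v u ∧ IsExposed ℝ X (segment ℝ v u) := by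
  set A := X.extremePoints ℝ \ {v}
  set ρ := radialProj f v
  have hfA : ∀ s ∈ A, 0 < f v - f s := fun s hs => sub_pos.2 (hf s hs.1 hs.2)
  obtain ⟨u, hu, rfl⟩ := extremePoints_convexHull_subset hq
  obtain ⟨-, h, hh⟩ := (hfin.sdiff.image ρ).extremePoints_convexHull_subset_exposedPoints hq
  have hρ : ∀ s ∈ A, ρ s ∈ convexHull ℝ (ρ '' A) :=
    fun s hs => subset_convexHull ℝ _ (mem_image_of_mem ρ hs)
  -- `g` is tilted by a multiple of `f` so that it is constant on the segment from `v` to `u`.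
  set g := h + (h (ρ u) - h v) • f
  have hg : ∀ s ∈ A, g s - g v = (f v - f s) * (h (ρ s) - h (ρ u)) := by
    intro s hs
    simp only [g, ρ, map_radialProj, add_apply, smul_apply, smul_eq_mul]
    field_simp [(hfA s hs).ne']
    ring
  have hmax : ∀ s ∈ X.extremePoints ℝ, g s ≤ g v := by
    intro s hs
    rcases eq_or_ne s v with rfl | hsv
    · exact le_rfl
    have := hg s ⟨hs, hsv⟩
    nlinarith [hfA s ⟨hs, hsv⟩, (hh _ (hρ s ⟨hs, hsv⟩)).1]
  have hface : {s ∈ X.extremePoints ℝ | g s = g v} = {v, u} := by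
    ext s
    constructor
    · rintro ⟨hs, hgs⟩
      rcases eq_or_ne s v with rfl | hsv
      · exact Or.inl rfl
      have := hg s ⟨hs, hsv⟩
      rw [hgs, sub_self, eq_comm, mul_eq_zero] at this
      have hρs := (hh _ (hρ s ⟨hs, hsv⟩)).2
        (sub_eq_zero.1 (this.resolve_left (hfA s ⟨hs, hsv⟩).ne')).ge
      exact Or.inr (radialProj_injOn f hv.1 hf ⟨hs, hsv⟩ hu hρs)
    · rintro (rfl | rfl)
      · exact ⟨hv, rfl⟩
      · exact ⟨hu.1, by linarith [hg s hu]⟩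
  refine ⟨u, hu, rfl, fun _ => ⟨g, ?_⟩⟩
  have hexp := g.toExposed_convexHull hv hmax
  rw [hX, hface, convexHull_pair] at hexp
  exact hexp.symm

end TopologicalGeometry

section Polytope

variable {n : ℕ}

theorem IsPolytope.finite_extremePoints {X : Set (Fin n → ℝ)} (hX : IsPolytope X) :
    (X.extremePoints ℝ).Finite := by
  obtain ⟨V, rfl⟩ := hX
  exact V.finite_toSet.subset extremePoints_convexHull_subset

theorem IsPolytope.convexHull_extremePoints {X : Set (Fin n → ℝ)} (hX : IsPolytope X) :
    convexHull ℝ (X.extremePoints ℝ) = X := by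
  obtain ⟨V, rfl⟩ := hX
  exact V.finite_toSet.convexHull_extremePoints_convexHull

theorem IsPolytope.exists_mem_extremePoints_map_eq {X : Set (Fin n → ℝ)} (hX : IsPolytope X)
    (l : (Fin n → ℝ) →L[ℝ] ℝ) {a : ℝ} (hXl : ∀ x ∈ X, l x ≤ a)
    (hne : (X ∩ {x | l x = a}).Nonempty) : ∃ v ∈ X.extremePoints ℝ, l v = a := by
  obtain ⟨x, hx, hlx⟩ := hne
  rw [← hX.convexHull_extremePoints] at hx
  exact convexHull_nonempty_iff.1
    ⟨x, mem_convexHull_setOf_map_eq_of_map_eq l.toLinearMap (fun s hs => hXl s hs.1) hx hlx⟩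

end Polytope

section ConeHull

variable {n : ℕ}

theorem zero_mem_coneHull (S : Set (Fin n → ℝ)) : 0 ∈ coneHull S := Or.inl rfl

theorem smul_mem_coneHull {S : Set (Fin n → ℝ)} {c : ℝ} (hc : 0 ≤ c) {p : Fin n → ℝ}
    (hp : p ∈ coneHull S) : c • p ∈ coneHull S := by
  rcases hp with rfl | ⟨d, hd, z, hz, rfl⟩
  · rw [smul_zero]
    exact zero_mem_coneHull S
  · exact Or.inr ⟨c * d, mul_nonneg hc hd, z, hz, smul_smul c d z⟩

theorem subset_coneHull (S : Set (Fin n → ℝ)) : S ⊆ coneHull S :=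
  fun z hz => Or.inr ⟨1, zero_le_one, z, subset_convexHull ℝ S hz, (one_smul ℝ z).symm⟩

theorem add_mem_coneHull {S : Set (Fin n → ℝ)} {p q : Fin n → ℝ} (hp : p ∈ coneHull S)
    (hq : q ∈ coneHull S) : p + q ∈ coneHull S := by
  rcases hp with rfl | ⟨c, hc, z, hz, rfl⟩
  · rwa [zero_add]
  rcases hq with rfl | ⟨d, hd, w, hw, rfl⟩
  · rw [add_zero]
    exact Or.inr ⟨c, hc, z, hz, rfl⟩
  rcases (add_nonneg hc hd).eq_or_lt with hcd | hcd
  · obtain ⟨rfl, rfl⟩ : c = 0 ∧ d = 0 := ⟨by linarith, by linarith⟩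
    rw [zero_smul, zero_smul, add_zero]
    exact zero_mem_coneHull S
  · refine Or.inr ⟨c + d, hcd.le, _, convex_iff_div.1 (convex_convexHull ℝ S) hz hw hc hd hcd, ?_⟩
    rw [smul_add, smul_smul, smul_smul, mul_div_cancel₀ _ hcd.ne', mul_div_cancel₀ _ hcd.ne']

theorem convex_coneHull (S : Set (Fin n → ℝ)) : Convex ℝ (coneHull S) :=
  fun _ hp _ hq _ _ ha hb _ => add_mem_coneHull (smul_mem_coneHull ha hp) (smul_mem_coneHull hb hq)

theorem coneHull_subset_span (S : Set (Fin n → ℝ)) : coneHull S ⊆ Submodule.span ℝ S := by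
  rintro p (rfl | ⟨c, -, z, hz, rfl⟩)
  · exact zero_mem _
  · exact Submodule.smul_mem _ c (convexHull_min Submodule.subset_span (Submodule.convex _) hz)

theorem map_nonpos_of_mem_coneHull (f : (Fin n → ℝ) →ₗ[ℝ] ℝ) {S : Set (Fin n → ℝ)}
    (hS : ∀ s ∈ S, f s ≤ 0) {p : Fin n → ℝ} (hp : p ∈ coneHull S) : f p ≤ 0 := by
  rcases hp with rfl | ⟨c, hc, z, hz, rfl⟩
  · rw [map_zero]
  · rw [map_smul, smul_eq_mul]
    exact mul_nonpos_of_nonneg_of_nonpos hc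
      (convexHull_min hS (convex_halfSpace_le f.isLinear 0) hz)

theorem mem_coneHull_setOf_map_eq_zero (f : (Fin n → ℝ) →ₗ[ℝ] ℝ) {S : Set (Fin n → ℝ)}
    (hS : ∀ s ∈ S, f s ≤ 0) {p : Fin n → ℝ} (hp : p ∈ coneHull S) (hfp : f p = 0) :
    p ∈ coneHull {s ∈ S | f s = 0} := by
  rcases hp with rfl | ⟨c, hc, z, hz, rfl⟩
  · exact zero_mem_coneHull _
  rcases hc.eq_or_lt with rfl | hc
  · rw [zero_smul]
    exact zero_mem_coneHull _
  rw [map_smul, smul_eq_mul, mul_eq_zero] at hfp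
  exact Or.inr ⟨c, hc.le, z, mem_convexHull_setOf_map_eq_of_map_eq f hS hz
    (hfp.resolve_left hc.ne'), rfl⟩

end ConeHull

section TangentCone

variable {n : ℕ} {X : Set (Fin n → ℝ)} {v : Fin n → ℝ}

theorem mem_tangentCone_iff {p : Fin n → ℝ} :
    p ∈ tangentCone X v ↔ p - v ∈ coneHull {z | ∃ x, AdjVert X v x ∧ z = x - v} :=
  ⟨fun ⟨y, hy, hp⟩ => by rwa [hp, add_sub_cancel_left], fun h => ⟨p - v, h, by abel⟩⟩

theorem convex_tangentCone : Convex ℝ (tangentCone X v) := by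
  intro p hp q hq a b ha hb hab
  rw [mem_tangentCone_iff] at hp hq ⊢
  convert convex_coneHull _ hp hq ha hb hab using 1
  obtain rfl : b = 1 - a := by linarith
  module

theorem IsPolytope.subset_tangentCone (hX : IsPolytope X) (hv : v ∈ X.extremePoints ℝ) :
    X ⊆ tangentCone X v := by
  have hfin := hX.finite_extremePoints
  have hconv := hX.convexHull_extremePoints
  have hexp := hfin.extremePoints_convexHull_subset_exposedPoints
  rw [hconv] at hexp
  obtain ⟨-, f, hf⟩ := hexp hv
  have hlt : ∀ s ∈ X.extremePoints ℝ, s ≠ v → f s < f v := fun s hs hsv =>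
    (hf s hs.1).1.lt_of_ne fun h => hsv ((hf s hs.1).2 h.ge)
  have hY : convexHull ℝ (radialProj f v '' (X.extremePoints ℝ \ {v})) ⊆ tangentCone X v := by
    rw [← (hfin.sdiff.image _).convexHull_extremePoints_convexHull]
    refine convexHull_min (fun q hq => ?_) convex_tangentCone
    obtain ⟨u, hu, rfl, hseg⟩ :=
      exists_isExposed_segment_of_mem_extremePoints_convexHull_radialProj hfin hconv hv f hlt hq
    rw [mem_tangentCone_iff, radialProj, add_sub_cancel_left]
    exact smul_mem_coneHull (inv_nonneg.2 (sub_pos.2 (hlt u hu.1 hu.2)).le)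
      (subset_coneHull _ ⟨u, ⟨Ne.symm hu.2, hv, hu.1, hseg⟩, rfl⟩)
  intro x hx
  rw [← hconv] at hx
  refine convexHull_min (fun s hs => ?_) convex_tangentCone hx
  rcases eq_or_ne s v with rfl | hsv
  · rw [mem_tangentCone_iff, sub_self]
    exact zero_mem_coneHull _
  have hρ := hY (subset_convexHull ℝ _ (mem_image_of_mem _ ⟨hs, hsv⟩))
  rw [mem_tangentCone_iff] at hρ ⊢
  rw [sub_eq_smul_radialProj_sub f (hlt s hs hsv).ne]
  exact smul_mem_coneHull (sub_pos.2 (hlt s hs hsv)).le hρ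

theorem map_sub_nonpos_of_adjVert (l : (Fin n → ℝ) →L[ℝ] ℝ) {a : ℝ} (hXl : ∀ x ∈ X, l x ≤ a)
    (hlv : l v = a) : ∀ d ∈ {z | ∃ x, AdjVert X v x ∧ z = x - v}, l d ≤ 0 := by
  rintro _ ⟨x, hx, rfl⟩
  rw [map_sub, hlv, sub_nonpos]
  exact hXl x hx.2.2.1.1

theorem map_le_of_mem_tangentCone (l : (Fin n → ℝ) →L[ℝ] ℝ) {a : ℝ} (hXl : ∀ x ∈ X, l x ≤ a)
    (hlv : l v = a) {p : Fin n → ℝ} (hp : p ∈ tangentCone X v) : l p ≤ a := by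
  rw [mem_tangentCone_iff] at hp
  have : l (p - v) ≤ 0 :=
    map_nonpos_of_mem_coneHull l.toLinearMap (map_sub_nonpos_of_adjVert l hXl hlv) hp
  rwa [map_sub, hlv, sub_nonpos] at this

theorem IsPolytope.vectorSpan_tangentCone_inter (hX : IsPolytope X) (hv : v ∈ X.extremePoints ℝ)
    (l : (Fin n → ℝ) →L[ℝ] ℝ) {a : ℝ} (hXl : ∀ x ∈ X, l x ≤ a) (hlv : l v = a) :
    vectorSpan ℝ (tangentCone X v ∩ {x | l x = a}) = vectorSpan ℝ (X ∩ {x | l x = a}) := by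
  have hvH : v ∈ X ∩ {x | l x = a} := ⟨hv.1, hlv⟩
  have hXC := inter_subset_inter_left {x | l x = a} (hX.subset_tangentCone hv)
  refine le_antisymm ?_ (vectorSpan_mono ℝ hXC)
  rw [vectorSpan_eq_span_vsub_set_right ℝ (hXC hvH), Submodule.span_le]
  rintro _ ⟨p, ⟨hp, hlp⟩, rfl⟩
  rw [mem_tangentCone_iff] at hp
  have hlpv : l (p - v) = 0 := by rw [map_sub, hlv, hlp.out, sub_self]
  refine (Submodule.span_le.2 ?_) (coneHull_subset_span _
    (mem_coneHull_setOf_map_eq_zero l.toLinearMap (map_sub_nonpos_of_adjVert l hXl hlv) hp hlpv))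
  rintro _ ⟨⟨x, hx, rfl⟩, hlx : l (x - v) = 0⟩
  rw [map_sub, hlv, sub_eq_zero] at hlx
  exact vsub_mem_vectorSpan ℝ ⟨hx.2.2.1.1, hlx⟩ hvH

theorem IsPolytope.vectorSpan_tangentCone (hX : IsPolytope X) (hv : v ∈ X.extremePoints ℝ) :
    vectorSpan ℝ (tangentCone X v) = vectorSpan ℝ X := by
  simpa only [zero_apply, ofPred_true, inter_univ] using
    hX.vectorSpan_tangentCone_inter hv 0 (a := 0) (fun _ _ => le_rfl) rfl

end TangentCone

theorem facet_iff_facet_of_tangentCones_general {n : ℕ} (X : Set (Fin n → ℝ))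
    (hX : IsPolytope X) (c : Fin n → ℝ) (c0 : ℝ)
    (H : Set (Fin n → ℝ)) (hH : H = {x | ∑ i, c i * x i = c0})
    (hsupp : ∀ x ∈ X, ∑ i, c i * x i ≤ c0) (hne : (X ∩ H).Nonempty) :
    IsFacet X (X ∩ H) ↔
      ∀ v ∈ X.extremePoints ℝ ∩ H, IsFacet (tangentCone X v) (tangentCone X v ∩ H) := by
  set l : (Fin n → ℝ) →L[ℝ] ℝ := ∑ i, c i • ContinuousLinearMap.proj i
  have hl : ∀ x, ∑ i, c i * x i = l x := fun x => by simp [l]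
  simp only [hl] at hH hsupp
  subst hH
  have hdim : ∀ v ∈ X.extremePoints ℝ ∩ {x | l x = c0},
      adim (tangentCone X v ∩ {x | l x = c0}) = adim (X ∩ {x | l x = c0}) ∧
        adim (tangentCone X v) = adim X := fun v ⟨hv, hlv⟩ =>
    ⟨by rw [adim, adim, hX.vectorSpan_tangentCone_inter hv l hsupp hlv],
      by rw [adim, adim, hX.vectorSpan_tangentCone hv]⟩
  constructor
  · rintro ⟨-, hfacet⟩ v hv
    refine ⟨isExposed_inter_setOf_eq l fun p => map_le_of_mem_tangentCone l hsupp hv.2, ?_⟩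
    rw [(hdim v hv).1, (hdim v hv).2]
    exact hfacet
  · intro h
    obtain ⟨v, hv, hlv⟩ := hX.exists_mem_extremePoints_map_eq l hsupp hne
    refine ⟨isExposed_inter_setOf_eq l hsupp, ?_⟩
    rw [← (hdim v ⟨hv, hlv⟩).1, ← (hdim v ⟨hv, hlv⟩).2]
    exact (h v ⟨hv, hlv⟩).2

/-- For a supporting hyperplane `H` of a polytope `X`, the set `X ∩ H` is a
facet of `X` iff `C_v(X) ∩ H` is a facet of the tangent cone `C_v(X)` for every vertex
`v` of `X` lying on `H`. -/
theorem facet_iff_facet_of_tangentCones {n : ℕ} (X : Set (Fin n → ℝ))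
    (hX : IsPolytope X) (c : Fin n → ℝ) (c0 : ℝ) (hc : c ≠ 0)
    (H : Set (Fin n → ℝ)) (hH : H = {x | ∑ i, c i * x i = c0})
    (hsupp : ∀ x ∈ X, ∑ i, c i * x i ≤ c0) (hne : (X ∩ H).Nonempty) :
    IsFacet X (X ∩ H) ↔
      ∀ v ∈ X.extremePoints ℝ ∩ H, IsFacet (tangentCone X v) (tangentCone X v ∩ H) :=
  facet_iff_facet_of_tangentCones_general X hX c c0 H hH hsupp hne
end

section
/- The neighbors (adjacent vertices) of the vertex 0 in the grlex polytope P are exactly w = (b-1)e_d and the points b e_j for 1 ≤ j ≤ d-1; in particular 0 has exactly d neighbors and the tangent cone of P at 0 equals ℝ^d_{≥0}. -/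
open Set Finset

/-!
Every point `x ≥ 0` of `ℤᵈ` with `x ≼_grlex θ` lies in the box `∏ⱼ [0, Mⱼ]`, where `Mⱼ = b` for
`j < d` and `M_d = b - 1`, and the corners `Mⱼ eⱼ` are themselves such points. Any convex set
squeezed between `{0, Mⱼ eⱼ}` and this box has exactly the axis segments `[0, Mⱼ eⱼ]` as edges
at `0`: each is cut out by the functional `-∑_{i ≠ j} xᵢ`, and conversely a functional exposing
an edge `[0, u]` is nonpositive on every `eᵢ`, so it vanishes on the axis of a nonzero coordinate
`j` of `u`; then `Mⱼ eⱼ ∈ [0, u]`, and `u ≤ M` forces `u = Mⱼ eⱼ`.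
-/

lemma isExposed_sep_eq_of_forall_le {E : Type*} [AddCommGroup E] [Module ℝ E] [TopologicalSpace E]
    {A : Set E} (l : StrongDual ℝ E) {c : ℝ} (hl : ∀ x ∈ A, l x ≤ c) :
    IsExposed ℝ A {x ∈ A | l x = c} := by
  rintro ⟨x₀, hx₀A, hx₀⟩
  refine ⟨l, Set.ext fun x => ⟨fun ⟨hxA, hx⟩ => ⟨hxA, fun y hy => hx ▸ hl y hy⟩,
    fun ⟨hxA, hx⟩ => ⟨hxA, le_antisymm (hl x hxA) (hx₀ ▸ hx x₀ hx₀A)⟩⟩⟩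

lemma mem_extremePoints_of_forall_le_or_ge {ι : Type*} {A : Set (ι → ℝ)} {x : ι → ℝ}
    (hx : x ∈ A) (h : ∀ i, (∀ y ∈ A, x i ≤ y i) ∨ (∀ y ∈ A, y i ≤ x i)) :
    x ∈ A.extremePoints ℝ := by
  refine mem_extremePoints_iff_left.2 ⟨hx, fun y hy z hz ⟨a, b, ha, hb, hab, hyz⟩ => ?_⟩
  funext i
  have hi : a * (y i - x i) + b * (z i - x i) = 0 := by
    linear_combination (by simpa using congrFun hyz i : a * y i + b * z i = x i) - x i * hab
  have hay : a * (y i - x i) = 0 := by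
    rcases h i with h | h
    · nlinarith [mul_nonneg ha.le (sub_nonneg.2 (h y hy)), mul_nonneg hb.le (sub_nonneg.2 (h z hz))]
    · nlinarith [mul_nonpos_of_nonneg_of_nonpos ha.le (sub_nonpos.2 (h y hy)),
        mul_nonpos_of_nonneg_of_nonpos hb.le (sub_nonpos.2 (h z hz))]
  exact sub_eq_zero.1 ((mul_eq_zero.1 hay).resolve_left ha.ne')

lemma sum_div_smul_single {ι : Type*} [Fintype ι] [DecidableEq ι] (p : ι → ℝ) {m : ι → ℝ}
    (hm : ∀ i, m i ≠ 0) : ∑ i, (p i / m i) • Pi.single i (m i) = p := by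
  simp_rw [← Pi.single_smul, smul_eq_mul, div_mul_cancel₀ _ (hm _)]
  exact Finset.univ_sum_single p

lemma mem_segment_zero_single_iff {ι : Type*} [DecidableEq ι] {j : ι} {a : ℝ} (ha : 0 < a)
    {x : ι → ℝ} :
    x ∈ segment ℝ 0 (Pi.single j a) ↔ 0 ≤ x j ∧ x j ≤ a ∧ ∀ i ≠ j, x i = 0 := by
  rw [segment_eq_image]
  constructor
  · rintro ⟨t, ⟨ht0, ht1⟩, rfl⟩
    refine ⟨by simpa using mul_nonneg ht0 ha.le, by simpa using mul_le_of_le_one_left ha.le ht1,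
      fun i hi => by simp [hi]⟩
  · rintro ⟨hx0, hxa, hx⟩
    refine ⟨x j / a, ⟨div_nonneg hx0 ha.le, (div_le_one ha).2 hxa⟩, funext fun i => ?_⟩
    by_cases hi : i = j
    · subst hi; simp [div_mul_cancel₀ _ ha.ne']
    · simp [hi, hx i hi]

section Box

variable {ι : Type*} [DecidableEq ι] {P : Set (ι → ℝ)} {m : ι → ℝ}

lemma segment_zero_single_eq (hP : Convex ℝ P) (h0 : 0 ∈ P) (hbox : P ⊆ Icc 0 m) {j : ι}
    (hm : 0 < m j) (hv : Pi.single j (m j) ∈ P) :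
    segment ℝ 0 (Pi.single j (m j)) = {x ∈ P | ∀ i ≠ j, x i = 0} := by
  ext x
  rw [mem_segment_zero_single_iff hm]
  constructor
  · intro hx
    exact ⟨hP.segment_subset h0 hv ((mem_segment_zero_single_iff hm).2 hx), hx.2.2⟩
  · rintro ⟨hxP, hx⟩
    exact ⟨(hbox hxP).1 j, (hbox hxP).2 j, hx⟩

lemma isExposed_segment_zero_single [Fintype ι] (hP : Convex ℝ P) (h0 : 0 ∈ P)
    (hbox : P ⊆ Icc 0 m) {j : ι} (hm : 0 < m j) (hv : Pi.single j (m j) ∈ P) :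
    IsExposed ℝ P (segment ℝ 0 (Pi.single j (m j))) := by
  let l : StrongDual ℝ (ι → ℝ) :=
    ContinuousLinearMap.proj j - ∑ i, ContinuousLinearMap.proj (R := ℝ) (φ := fun _ : ι => ℝ) i
  have hl : ∀ x, l x = -∑ i ∈ univ.erase j, x i := fun x => by
    simp [l, Finset.sum_erase_eq_sub (mem_univ j)]
  have hnonneg : ∀ x ∈ P, ∀ i, 0 ≤ x i := fun x hx => (hbox hx).1
  have hseg : segment ℝ 0 (Pi.single j (m j)) = {x ∈ P | l x = 0} := by
    rw [segment_zero_single_eq hP h0 hbox hm hv]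
    refine Set.sep_ext_iff.2 fun x hx => ?_
    rw [hl, neg_eq_zero, Finset.sum_eq_zero_iff_of_nonneg fun i _ => hnonneg x hx i]
    simp
  rw [hseg]
  refine isExposed_sep_eq_of_forall_le l fun x hx => ?_
  rw [hl, neg_nonpos]
  exact Finset.sum_nonneg fun i _ => hnonneg x hx i

lemma ncard_range_single (hm : ∀ i, m i ≠ 0) :
    (range fun j => Pi.single j (m j)).ncard = Nat.card ι := by
  refine Set.ncard_range_of_injective fun i j hij => ?_
  by_contra hne
  exact hm i (by simpa [hne] using congrFun hij i)

end Box

section FinBox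

variable {n : ℕ} {P : Set (Fin n → ℝ)} {m : Fin n → ℝ}

lemma adjVert_zero_single (hP : Convex ℝ P) (h0 : 0 ∈ P) (hbox : P ⊆ Icc 0 m) {j : Fin n}
    (hm : 0 < m j) (hv : Pi.single j (m j) ∈ P) : AdjVert P 0 (Pi.single j (m j)) := by
  refine ⟨fun h => hm.ne (by simpa using congrFun h j), ?_, ?_,
    isExposed_segment_zero_single hP h0 hbox hm hv⟩
  · exact mem_extremePoints_of_forall_le_or_ge h0 fun i => Or.inl fun y hy => (hbox hy).1 i
  · refine mem_extremePoints_of_forall_le_or_ge hv fun i => ?_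
    by_cases hi : i = j
    · subst hi
      exact Or.inr fun y hy => by simpa using (hbox hy).2 i
    · exact Or.inl fun y hy => by simpa [hi] using (hbox hy).1 i

lemma exists_single_eq_of_adjVert_zero (hbox : P ⊆ Icc 0 m) (hm : ∀ i, 0 < m i)
    (hv : ∀ i, Pi.single i (m i) ∈ P) {u : Fin n → ℝ} (hu : AdjVert P 0 u) :
    ∃ j, Pi.single j (m j) = u := by
  obtain ⟨hne, h0, huext, hexp⟩ := hu
  obtain ⟨l, hl⟩ := hexp ⟨0, left_mem_segment ℝ 0 u⟩
  have huP : u ∈ P := extremePoints_subset huext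
  have hl0 : ∀ y ∈ P, l y ≤ 0 := fun y hy =>
    ((hl ▸ left_mem_segment ℝ 0 u).2 y hy).trans_eq (map_zero l)
  have hlu : l u = 0 := le_antisymm (hl0 u huP) <|
    (map_zero l).symm.trans_le ((hl ▸ right_mem_segment ℝ 0 u).2 0 (extremePoints_subset h0))
  obtain ⟨j, hj⟩ : ∃ j, u j ≠ 0 := by
    by_contra! h
    exact hne (funext h).symm
  have huj : 0 < u j := lt_of_le_of_ne ((hbox huP).1 j) (Ne.symm hj)
  -- `l u = ∑ i, (u i / m i) * l (Pi.single i (m i))` is a sum of nonpositive terms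
  have hlv : l (Pi.single j (m j)) = 0 := by
    have hsum : ∑ i, (u i / m i) * l (Pi.single i (m i)) = 0 := by
      rw [← hlu]
      conv_rhs => rw [← sum_div_smul_single u fun i => (hm i).ne']
      simp [map_sum, map_smul]
    have hterm := (Finset.sum_eq_zero_iff_of_nonpos fun i _ =>
      mul_nonpos_of_nonneg_of_nonpos (div_nonneg ((hbox huP).1 i) (hm i).le) (hl0 _ (hv i))).1
      hsum j (mem_univ j)
    exact (mul_eq_zero.1 hterm).resolve_left (div_pos huj (hm j)).ne'
  have hvseg : Pi.single j (m j) ∈ segment ℝ 0 u := hl ▸ ⟨hv j, fun y hy => hlv ▸ hl0 y hy⟩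
  rw [segment_eq_image] at hvseg
  obtain ⟨a, ⟨-, ha1⟩, hav⟩ := hvseg
  have hmj : a * u j = m j := by simpa using congrFun hav j
  have ha : a = 1 := by nlinarith [(hbox huP).2 j]
  exact ⟨j, by simpa [ha] using hav.symm⟩

lemma setOf_adjVert_zero_eq_range (hP : Convex ℝ P) (h0 : 0 ∈ P) (hbox : P ⊆ Icc 0 m)
    (hm : ∀ i, 0 < m i) (hv : ∀ i, Pi.single i (m i) ∈ P) :
    {u | AdjVert P 0 u} = range fun j => Pi.single j (m j) := by
  ext u
  constructor
  · exact exists_single_eq_of_adjVert_zero hbox hm hv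
  · rintro ⟨j, rfl⟩
    exact adjVert_zero_single hP h0 hbox (hm j) (hv j)

lemma coneHull_range_single (hm : ∀ i, 0 < m i) :
    coneHull (range fun j => Pi.single j (m j)) = Set.Ici 0 := by
  apply Set.Subset.antisymm
  · have hhull : convexHull ℝ (range fun j => Pi.single j (m j)) ⊆ Set.Ici 0 :=
      convexHull_min (by rintro _ ⟨j, rfl⟩; exact Pi.single_nonneg.2 (hm j).le) (convex_Ici 0)
    rintro p (rfl | ⟨c, hc, z, hz, rfl⟩)
    · exact Set.self_mem_Ici
    · exact smul_nonneg hc (Set.mem_Ici.1 (hhull hz))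
  · intro p hp
    by_cases hp0 : p = 0
    · exact Or.inl hp0
    set w : Fin n → ℝ := fun i => p i / m i
    have hw : ∀ i ∈ Finset.univ, 0 ≤ w i := fun i _ => div_nonneg (hp i) (hm i).le
    have hwpos : 0 < ∑ i, w i := by
      obtain ⟨i, hi⟩ : ∃ i, p i ≠ 0 := by
        by_contra! h
        exact hp0 (funext h)
      exact Finset.sum_pos' hw ⟨i, mem_univ i, div_pos (lt_of_le_of_ne (hp i) (Ne.symm hi)) (hm i)⟩
    refine Or.inr ⟨∑ i, w i, hwpos.le, Finset.univ.centerMass w fun j => Pi.single j (m j),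
      Finset.centerMass_mem_convexHull _ hw hwpos fun i _ => mem_range_self i, ?_⟩
    rw [Finset.centerMass, smul_smul, mul_inv_cancel₀ hwpos.ne', one_smul]
    exact (sum_div_smul_single p fun i => (hm i).ne').symm

lemma tangentCone_zero_eq_Ici (hP : Convex ℝ P) (h0 : 0 ∈ P) (hbox : P ⊆ Icc 0 m)
    (hm : ∀ i, 0 < m i) (hv : ∀ i, Pi.single i (m i) ∈ P) :
    tangentCone P 0 = Set.Ici 0 := by
  have hnbr : {z | ∃ x, AdjVert P 0 x ∧ z = x - 0} = range fun j => Pi.single j (m j) := by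
    simp_rw [sub_zero, exists_eq_right']
    exact setOf_adjVert_zero_eq_range hP h0 hbox hm hv
  unfold tangentCone
  rw [hnbr, coneHull_range_single hm]
  ext p
  simp

end FinBox

section Grlex

variable {d : ℕ} {θ : Fin d → ℤ}

lemma lexLe.apply_last_le {x y : Fin d → ℤ} (h : lexLe x y) {i : Fin d} (hi : (i : ℕ) = d - 1) :
    x i ≤ y i := by
  rcases h with rfl | ⟨k, hk, hky⟩
  · exact le_rfl
  · rcases (Fin.le_iff_val_le_val.2 (by omega : (k : ℕ) ≤ i)).eq_or_lt with rfl | hki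
    · exact hk.le
    · exact (hky i hki).le

lemma apply_lt_bsum (hθ : ∀ i, 1 ≤ θ i) {j k : Fin d} (hjk : j ≠ k) : θ j < bsum θ := by
  have : θ j + θ k ≤ bsum θ := by
    rw [← Finset.sum_pair hjk]
    exact Finset.sum_le_sum_of_subset_of_nonneg (subset_univ _) fun i _ _ => by linarith [hθ i]
  linarith [hθ k]

/-- `t • e_j` is `≼_grlex θ` exactly for `t ≤ grlexAxisBound θ j`: on the last axis `b • e_d`
has the sum of `θ` but exceeds it in the last coordinate. -/
def grlexAxisBound (θ : Fin d → ℤ) (j : Fin d) : ℤ :=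
  if (j : ℕ) = d - 1 then bsum θ - 1 else bsum θ

lemma two_le_bsum (hd : 2 ≤ d) (hθ : ∀ i, 1 ≤ θ i) : 2 ≤ bsum θ := by
  have := apply_lt_bsum hθ (j := ⟨0, by omega⟩) (k := ⟨1, by omega⟩) (by simp)
  linarith [hθ ⟨0, by omega⟩]

lemma zero_lt_grlexAxisBound (hd : 2 ≤ d) (hθ : ∀ i, 1 ≤ θ i) (j : Fin d) :
    0 < grlexAxisBound θ j := by
  have := two_le_bsum hd hθ
  unfold grlexAxisBound
  split_ifs <;> omega

lemma apply_le_grlexAxisBound (hd : 2 ≤ d) (hθ : ∀ i, 1 ≤ θ i) {x : Fin d → ℤ} (hx : 0 ≤ x)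
    (hxθ : grlexLe x θ) (j : Fin d) : x j ≤ grlexAxisBound θ j := by
  have hxj : x j ≤ ∑ i, x i := Finset.single_le_sum (fun i _ => hx i) (Finset.mem_univ j)
  have hsum : ∑ i, x i ≤ bsum θ := by rcases hxθ with h | ⟨h, -⟩ <;> unfold bsum <;> omega
  unfold grlexAxisBound
  split_ifs with hj
  · rcases hxθ with h | ⟨-, hlex⟩
    · unfold bsum; omega
    · have := apply_lt_bsum hθ (j := j) (k := ⟨0, by omega⟩) (by simp [Fin.ext_iff]; omega)
      linarith [lexLe.apply_last_le hlex hj]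
  · omega

lemma grlexLe_single_grlexAxisBound (hd : 2 ≤ d) (hθ : ∀ i, 1 ≤ θ i) (j : Fin d) :
    grlexLe (Pi.single j (grlexAxisBound θ j)) θ := by
  unfold grlexLe
  rw [Finset.sum_pi_single', if_pos (Finset.mem_univ j)]
  unfold grlexAxisBound
  split_ifs with hj
  · left; unfold bsum; omega
  · refine Or.inr ⟨rfl, Or.inr ⟨⟨d - 1, by omega⟩, ?_, fun k hk => ?_⟩⟩
    · rw [Pi.single_eq_of_ne (by simp [Fin.ext_iff]; omega)]
      linarith [hθ ⟨d - 1, by omega⟩]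
    · simp only [Fin.lt_def] at hk
      omega

lemma toR_single (j : Fin d) (t : ℤ) : toR (Pi.single j t) = Pi.single j (t : ℝ) := by
  ext i
  by_cases hi : i = j
  · subst hi; simp [toR]
  · simp [toR, hi]

lemma zero_mem_grlexP (hd : 2 ≤ d) (hθ : ∀ i, 1 ≤ θ i) : (0 : Fin d → ℝ) ∈ grlexP d θ := by
  refine subset_convexHull ℝ _ ⟨0, fun _ => le_rfl, Or.inl ?_, by ext; simp [toR]⟩
  have := two_le_bsum hd hθ
  unfold bsum at this
  simp only [Pi.zero_apply, Finset.sum_const_zero]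
  omega

lemma single_mem_grlexP (hd : 2 ≤ d) (hθ : ∀ i, 1 ≤ θ i) (j : Fin d) :
    Pi.single j (grlexAxisBound θ j : ℝ) ∈ grlexP d θ :=
  subset_convexHull ℝ _ ⟨Pi.single j (grlexAxisBound θ j),
    (Pi.single_nonneg.2 (zero_lt_grlexAxisBound hd hθ j).le : (0 : Fin d → ℤ) ≤ Pi.single j _),
    grlexLe_single_grlexAxisBound hd hθ j, (toR_single j _).symm⟩

lemma grlexP_subset_Icc (hd : 2 ≤ d) (hθ : ∀ i, 1 ≤ θ i) :
    grlexP d θ ⊆ Icc 0 fun j => (grlexAxisBound θ j : ℝ) := by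
  refine convexHull_min ?_ (convex_Icc _ _)
  rintro _ ⟨x, hx, hxθ, rfl⟩
  exact ⟨fun i => by simpa [toR] using hx i,
    fun i => by simpa [toR] using apply_le_grlexAxisBound hd hθ hx hxθ i⟩

lemma toR_wP (hd : 1 ≤ d) :
    toR (wP d θ) = Pi.single ⟨d - 1, by omega⟩ (grlexAxisBound θ ⟨d - 1, by omega⟩ : ℝ) := by
  ext i
  by_cases hi : (i : ℕ) = d - 1
  · rw [show i = ⟨d - 1, by omega⟩ from Fin.ext hi]
    simp [toR, wP, grlexAxisBound]
  · simp [toR, wP, hi, Fin.ext_iff]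

lemma toR_beP {j : Fin d} (hj : (j : ℕ) ≠ d - 1) :
    toR (beP d θ (j + 1)) = Pi.single j (grlexAxisBound θ j : ℝ) := by
  ext i
  by_cases hi : i = j
  · subst hi; simp [toR, beP, grlexAxisBound, hj]
  · simp [toR, beP, hi, Fin.val_ne_of_ne hi]

lemma range_single_grlexAxisBound (hd : 1 ≤ d) :
    (range fun j => Pi.single j (grlexAxisBound θ j : ℝ)) =
      {toR (wP d θ)} ∪ {p | ∃ j : ℕ, 1 ≤ j ∧ j ≤ d - 1 ∧ p = toR (beP d θ j)} := by
  ext p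
  constructor
  · rintro ⟨j, rfl⟩
    by_cases hj : (j : ℕ) = d - 1
    · rw [show j = ⟨d - 1, by omega⟩ from Fin.ext hj]
      exact Or.inl (toR_wP hd).symm
    · exact Or.inr ⟨j + 1, by omega, by omega, (toR_beP hj).symm⟩
  · rintro (rfl | ⟨j, hj1, hjd, rfl⟩)
    · exact ⟨_, (toR_wP hd).symm⟩
    · obtain ⟨k, rfl⟩ : ∃ k, j = k + 1 := ⟨j - 1, by omega⟩
      exact ⟨⟨k, by omega⟩, (toR_beP (j := ⟨k, by omega⟩) (by simp; omega)).symm⟩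

end Grlex

/-- The neighbors of the vertex `0` of the grlex polytope `P` are exactly
`w = (b-1)e_d` and the points `b·e_j` for `1 ≤ j ≤ d-1`; in particular `0` has exactly
`d` neighbors, and the tangent cone of `P` at `0` is the nonnegative orthant. -/
theorem grlexP_neighbors_of_zero (d : ℕ) (hd : 3 ≤ d) (θ : Fin d → ℤ)
    (hθ : ∀ i, 1 ≤ θ i) :
    {u | AdjVert (grlexP d θ) 0 u} =
        {toR (wP d θ)} ∪ {p | ∃ j : ℕ, 1 ≤ j ∧ j ≤ d - 1 ∧ p = toR (beP d θ j)} ∧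
      {u | AdjVert (grlexP d θ) 0 u}.ncard = d ∧
      tangentCone (grlexP d θ) 0 = {x | ∀ i, 0 ≤ x i} := by
  have hd2 : 2 ≤ d := by omega
  have hconv : Convex ℝ (grlexP d θ) := convex_convexHull ℝ _
  have hm : ∀ j, 0 < (grlexAxisBound θ j : ℝ) := fun j =>
    Int.cast_pos.2 (zero_lt_grlexAxisBound hd2 hθ j)
  have hadj := setOf_adjVert_zero_eq_range hconv (zero_mem_grlexP hd2 hθ)
    (grlexP_subset_Icc hd2 hθ) hm (single_mem_grlexP hd2 hθ)
  refine ⟨hadj.trans (range_single_grlexAxisBound (by omega)), ?_, ?_⟩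
  · rw [hadj, ncard_range_single fun j => (hm j).ne', Nat.card_fin]
  · exact tangentCone_zero_eq_Ici hconv (zero_mem_grlexP hd2 hθ) (grlexP_subset_Icc hd2 hθ) hm
      (single_mem_grlexP hd2 hθ)
end

section
/- The vertices of the grevlex polytope Q are exactly: the origin 0, the points u^k = (b̃_{k-1} e_{k-1}, θ_k, θ_{k+1}, ..., θ_d) for 2 ≤ k ≤ d+1, and the points v^{j,k} = ((b̃_{k-1}-1)e_j, 0, ..., 0, θ_k + 1, θ_{k+1}, ..., θ_d) for 1 ≤ j < k-1 ≤ d. In particular u^2 = θ, u^{d+1} = b e_d, and v^{j,d+1} = (b-1)e_j. -/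
open Set Finset

/-!
Let `S` be the set of lattice points generating `Q`, so that `Q = conv S`. A point of `S` that is
not in the list is the midpoint of two other points of `S`, obtained by moving one unit between two
coordinates (or along a single coordinate), so it is not a vertex. Conversely every listed point
is the unique maximiser on `S` of an integer linear functional: `-∑ x` for `0` and
`2 x_j - ∑ x` for `(b-1) e_j`. The points `u^k` and `v^{j,k}` lie on the top level `∑ x = b`;
there one first rewards `∑ x`, then penalises the coordinates below `k` that must vanish, and
finally breaks ties with the weights `(b+1)^i`, which turn the reverse lexicographic order on
`[0, b]^d` into the order of `ℤ`.
-/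

section Convex

variable {𝕜 E : Type*} [Field 𝕜] [LinearOrder 𝕜] [IsStrictOrderedRing 𝕜] [AddCommGroup E]
  [Module 𝕜 E]

theorem mem_extremePoints_convexHull_of_forall_lt (l : E →ₗ[𝕜] 𝕜) {A : Set E} {p : E}
    (hp : p ∈ A) (h : ∀ x ∈ A, x ≠ p → l x < l p) :
    p ∈ (convexHull 𝕜 A).extremePoints 𝕜 := by
  have mix : ∀ {a b u w : 𝕜}, 0 < a → 0 ≤ b → a + b = 1 → u < l p → w ≤ l p →
      a * u + b * w < l p := fun ha hb hab hu hw =>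
    calc _ < _ := add_lt_add_of_lt_of_le (mul_lt_mul_of_pos_left hu ha)
            (mul_le_mul_of_nonneg_left hw hb)
      _ = l p := by rw [← add_mul, hab, one_mul]
  have hconv : Convex 𝕜 {x | x = p ∨ l x < l p} := by
    rw [convex_iff_openSegment_subset]
    rintro x hx y hy _ ⟨a, b, ha, hb, hab, rfl⟩
    have hy' : l y ≤ l p := hy.elim (fun h => h ▸ le_rfl) le_of_lt
    obtain rfl | hx := hx
    · obtain rfl | hy := hy
      · exact Or.inl (Convex.combo_self hab _)
      · refine Or.inr ?_
        simpa [add_comm] using mix hb ha.le (by rw [add_comm, hab]) hy le_rfl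
    · exact Or.inr (by simpa using mix ha hb.le hab hx hy')
  have hle : ∀ x ∈ convexHull 𝕜 A, x = p ∨ l x < l p :=
    convexHull_min (fun x hx => (eq_or_ne x p).imp_right (h x hx)) hconv
  refine ⟨subset_convexHull 𝕜 A hp, fun x hx y hy ⟨a, b, ha, hb, hab, hxy⟩ => ?_⟩
  by_contra hne
  have hy' : l y ≤ l p := (hle y hy).elim (fun h => h ▸ le_rfl) le_of_lt
  exact (mix ha hb.le hab ((hle x hx).resolve_left hne) hy').ne (by rw [← hxy]; simp)

theorem not_mem_extremePoints_of_add_mem_of_sub_mem {B : Set E} {x v : E} (hv : v ≠ 0)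
    (h₁ : x + v ∈ B) (h₂ : x - v ∈ B) : x ∉ B.extremePoints 𝕜 := fun hx =>
  hv <| by simpa using hx.2 h₁ h₂ ⟨1 / 2, 1 / 2, by norm_num, by norm_num, by norm_num, by module⟩

end Convex

section IntegerPoints

variable {ι : Type*}

def IsProperMidpoint (S : Set (ι → ℤ)) (x : ι → ℤ) : Prop :=
  ∃ v ≠ 0, x + v ∈ S ∧ x - v ∈ S

def IsExposedPoint [Fintype ι] (S : Set (ι → ℤ)) (p : ι → ℤ) : Prop :=
  p ∈ S ∧ ∃ c : ι → ℤ, ∀ x ∈ S, x ≠ p → c ⬝ᵥ x < c ⬝ᵥ p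

theorem eq_of_sum_eq_of_forall_ne {M : Type*} [AddCancelCommMonoid M] [Fintype ι]
    [DecidableEq ι] {x y : ι → M} (i : ι) (h : ∀ k, k ≠ i → x k = y k)
    (hs : ∑ k, x k = ∑ k, y k) : x = y := by
  have hrest : ∑ k ∈ univ.erase i, x k = ∑ k ∈ univ.erase i, y k :=
    sum_congr rfl fun k hk => h k (ne_of_mem_erase hk)
  have hi : x i = y i := by
    rw [← add_sum_erase _ _ (mem_univ i), ← add_sum_erase _ _ (mem_univ i), hrest] at hs
    exact add_right_cancel hs
  funext k
  by_cases hk : k = i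
  · exact hk ▸ hi
  · exact h k hk

variable {d : ℕ}

theorem toR_injective : Function.Injective (toR : (Fin d → ℤ) → Fin d → ℝ) := fun _ _ h =>
  funext fun i => by simpa [toR] using congrFun h i

theorem toR_mem_extremePoints_of_isExposedPoint {S : Set (Fin d → ℤ)} {p : Fin d → ℤ}
    (hp : IsExposedPoint S p) : toR p ∈ (convexHull ℝ (toR '' S)).extremePoints ℝ := by
  obtain ⟨hpS, c, hc⟩ := hp
  refine mem_extremePoints_convexHull_of_forall_lt (dotProductBilin ℝ ℝ (toR c)) ⟨p, hpS, rfl⟩ ?_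
  rintro _ ⟨x, hx, rfl⟩ hne
  have hlt : ((c ⬝ᵥ x : ℤ) : ℝ) < c ⬝ᵥ p := by exact_mod_cast hc x hx fun h => hne (h ▸ rfl)
  simpa [toR, dotProduct] using hlt

theorem toR_not_mem_extremePoints_of_isProperMidpoint {S : Set (Fin d → ℤ)} {x : Fin d → ℤ}
    (hx : IsProperMidpoint S x) : toR x ∉ (convexHull ℝ (toR '' S)).extremePoints ℝ := by
  obtain ⟨v, hv, h₁, h₂⟩ := hx
  refine not_mem_extremePoints_of_add_mem_of_sub_mem (v := toR v) ?_
    (subset_convexHull ℝ _ ⟨_, h₁, ?_⟩) (subset_convexHull ℝ _ ⟨_, h₂, ?_⟩)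
  · exact fun h => hv (toR_injective (h.trans (by ext; simp [toR])))
  all_goals ext; simp [toR]

end IntegerPoints

namespace GrevlexQ

variable {d : ℕ}

section Definitions

variable (θ : Fin d → ℤ)

def pts : Set (Fin d → ℤ) := {x | (∀ i, 0 ≤ x i) ∧ grevlexLe x θ}

def tail (m : ℕ) : Fin d → ℤ := fun i => if m ≤ (i : ℕ) then θ i else 0

-- With 0-indexed coordinates, `U θ m = u^{m+2}`, `V θ a m = v^{a+1,m+1}` for `m < d`,
-- and `W θ a = v^{a+1,d+1}`.
def U (m : Fin d) : Fin d → ℤ := Pi.single m (btil θ (m + 1)) + tail θ (m + 1)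

def V (a m : Fin d) : Fin d → ℤ := Pi.single a (btil θ m - 1) + Pi.single m 1 + tail θ m

def W (a : Fin d) : Fin d → ℤ := Pi.single a (bsum θ - 1)

def vertices : Set (Fin d → ℤ) :=
  {0} ∪ range (U θ) ∪ {x | ∃ a m : Fin d, (a : ℕ) + 2 ≤ m ∧ V θ a m = x} ∪
    {x | ∃ a : Fin d, (a : ℕ) + 2 ≤ d ∧ W θ a = x}

theorem zero_mem_vertices : (0 : Fin d → ℤ) ∈ vertices θ := Or.inl (Or.inl (Or.inl rfl))

theorem U_mem_vertices (m : Fin d) : U θ m ∈ vertices θ := Or.inl (Or.inl (Or.inr ⟨m, rfl⟩))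

theorem V_mem_vertices {a m : Fin d} (h : (a : ℕ) + 2 ≤ m) : V θ a m ∈ vertices θ :=
  Or.inl (Or.inr ⟨a, m, h, rfl⟩)

theorem W_mem_vertices {a : Fin d} (h : (a : ℕ) + 2 ≤ d) : W θ a ∈ vertices θ :=
  Or.inr ⟨a, h, rfl⟩

theorem grevlexQ_eq : grevlexQ d θ = convexHull ℝ (toR '' pts θ) := by
  unfold grevlexQ pts
  congr 1
  ext p
  simp [and_assoc, eq_comm]

theorem btil_add_sum_tail (m : ℕ) : btil θ m + ∑ i, tail θ m i = bsum θ := by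
  simp only [btil, tail, bsum, sum_filter, ← sum_add_distrib]
  exact sum_congr rfl fun i _ => by split_ifs <;> omega

theorem btil_succ (m : Fin d) : btil θ (m + 1) = btil θ m + θ m := by
  simp only [btil, sum_filter]
  rw [← Fintype.sum_ite_eq' m θ, ← sum_add_distrib]
  exact sum_congr rfl fun i _ => by split_ifs <;> omega

theorem btil_of_le {m : ℕ} (h : d ≤ m) : btil θ m = bsum θ := by
  simp only [btil, bsum]
  rw [filter_true_of_mem fun i _ => by omega]

theorem sum_U (m : Fin d) : ∑ i, U θ m i = bsum θ := by
  simp [U, sum_add_distrib, btil_add_sum_tail]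

theorem sum_V (a m : Fin d) : ∑ i, V θ a m i = bsum θ := by
  simp [V, sum_add_distrib, ← btil_add_sum_tail θ m]

theorem sum_W (a : Fin d) : ∑ i, W θ a i = bsum θ - 1 := by
  simp [W]

theorem U_apply (m i : Fin d) :
    U θ m i = if i = m then btil θ (m + 1) else if m < i then θ i else 0 := by
  simp only [U, tail, Pi.add_apply, Pi.single_apply]
  split_ifs <;> omega

theorem V_apply {a m : Fin d} (ham : a < m) (i : Fin d) :
    V θ a m i = if i = a then btil θ m - 1 else if i = m then θ i + 1 else
      if m < i then θ i else 0 := by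
  simp only [V, tail, Pi.add_apply, Pi.single_apply]
  split_ifs <;> subst_vars <;> omega

end Definitions

variable {θ : Fin d → ℤ} {x : Fin d → ℤ}

theorem sum_le_of_mem_pts (hx : x ∈ pts θ) : ∑ i, x i ≤ bsum θ :=
  hx.2.elim le_of_lt fun h => h.1.le

theorem le_bsum_of_mem_pts (hx : x ∈ pts θ) (i : Fin d) : x i ≤ bsum θ :=
  (single_le_sum (fun j _ => hx.1 j) (mem_univ i)).trans (sum_le_of_mem_pts hx)

theorem lexLe_of_mem_pts (hx : x ∈ pts θ) (hs : ∑ i, x i = bsum θ) : lexLe θ x :=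
  (hx.2.resolve_left (by rw [hs]; exact lt_irrefl _)).2

theorem mem_pts_of_sum_lt (h0 : ∀ i, 0 ≤ x i) (hs : ∑ i, x i < bsum θ) : x ∈ pts θ :=
  ⟨h0, Or.inl hs⟩

theorem mem_pts_of_witness (h0 : ∀ i, 0 ≤ x i) (hs : ∑ i, x i = bsum θ) (m : Fin d)
    (hm : θ m < x m) (habove : ∀ k, m < k → x k = θ k) : x ∈ pts θ :=
  ⟨h0, Or.inr ⟨hs, Or.inr ⟨m, hm, fun k hk => (habove k hk).symm⟩⟩⟩

theorem le_apply_of_lexLe (h : lexLe θ x) (k : Fin d) (habove : ∀ j, k < j → x j = θ j) :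
    θ k ≤ x k := by
  obtain rfl | ⟨i, hi, hix⟩ := h
  · exact le_rfl
  rcases lt_trichotomy i k with hik | rfl | hki
  · exact (hix k hik).le
  · exact hi.le
  · exact absurd (habove i hki) hi.ne'

theorem eq_above_or_witness_above_of_lexLe (h : lexLe θ x) (m : Fin d) :
    (∀ k, m < k → x k = θ k) ∨ ∃ i, m < i ∧ θ i < x i ∧ ∀ k, i < k → x k = θ k := by
  obtain rfl | ⟨i, hi, hix⟩ := h
  · exact Or.inl fun _ _ => rfl
  by_cases hmi : m < i
  · exact Or.inr ⟨i, hmi, hi, fun k hk => (hix k hk).symm⟩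
  · exact Or.inl fun k hk => (hix k (lt_of_le_of_lt (not_lt.mp hmi) hk)).symm

theorem eq_U_of {m : Fin d} (hs : ∑ i, x i = bsum θ) (hbelow : ∀ k, k < m → x k = 0)
    (habove : ∀ k, m < k → x k = θ k) : x = U θ m := by
  refine eq_of_sum_eq_of_forall_ne m (fun k hk => ?_) (hs.trans (sum_U θ m).symm)
  rw [U_apply, if_neg hk]
  rcases lt_or_gt_of_ne hk with h | h
  · rw [if_neg (not_lt.mpr h.le), hbelow k h]
  · rw [if_pos h, habove k h]

theorem U_zero (θ : Fin d → ℤ) (hd : 0 < d) : U θ ⟨0, hd⟩ = θ :=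
  (eq_U_of rfl (fun _ hk => absurd (Fin.lt_def.mp hk) (Nat.not_lt_zero _)) fun _ _ => rfl).symm

theorem eq_V_of {a m : Fin d} (ham : a < m) (hs : ∑ i, x i = bsum θ)
    (hbelow : ∀ k, k < m → k ≠ a → x k = 0) (hm : x m = θ m + 1)
    (habove : ∀ k, m < k → x k = θ k) : x = V θ a m := by
  refine eq_of_sum_eq_of_forall_ne a (fun k hk => ?_) (hs.trans (sum_V θ a m).symm)
  rw [V_apply θ ham, if_neg hk]
  rcases lt_trichotomy k m with h | rfl | h
  · rw [if_neg h.ne, if_neg (not_lt.mpr h.le), hbelow k h hk]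
  · rw [if_pos rfl, hm]
  · rw [if_neg h.ne', if_pos h, habove k h]

theorem eq_W_of {a : Fin d} (hs : ∑ i, x i = bsum θ - 1) (h : ∀ k, k ≠ a → x k = 0) :
    x = W θ a :=
  eq_of_sum_eq_of_forall_ne a (fun k hk => by simp [W, hk, h k hk]) (hs.trans (sum_W θ a).symm)

section Vertices

variable (hθ : ∀ i, 1 ≤ θ i)
include hθ

theorem le_btil {m : ℕ} {i : Fin d} (h : (i : ℕ) < m) : θ i ≤ btil θ m :=
  single_le_sum (f := θ) (fun j _ => zero_le_one.trans (hθ j)) (by simpa using h)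

theorem le_bsum (i : Fin d) : θ i ≤ bsum θ :=
  single_le_sum (fun j _ => zero_le_one.trans (hθ j)) (mem_univ i)

theorem U_mem (m : Fin d) : U θ m ∈ pts θ := by
  refine ⟨fun i => ?_, Or.inr ⟨sum_U θ m, ?_⟩⟩
  · rw [U_apply]
    split_ifs
    · linarith [hθ m, le_btil hθ (i := m) (m := m + 1) (by omega)]
    all_goals linarith [hθ i]
  by_cases hm : (m : ℕ) = 0
  · left
    rw [show m = ⟨0, m.pos⟩ from Fin.ext hm]
    exact (U_zero θ _).symm
  · right
    refine ⟨m, ?_, fun k hk => ?_⟩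
    · rw [U_apply, if_pos rfl, btil_succ]
      have h0 := le_btil hθ (i := ⟨0, by omega⟩) (m := m) (by simp; omega)
      linarith [hθ ⟨0, by omega⟩]
    · rw [U_apply, if_neg hk.ne', if_pos hk]

theorem V_mem {a m : Fin d} (ham : a < m) : V θ a m ∈ pts θ := by
  have ha : θ a ≤ btil θ m := le_btil hθ ham
  refine mem_pts_of_witness (fun i => ?_) (sum_V θ a m) m ?_ fun k hk => ?_
  · rw [V_apply θ ham]
    split_ifs <;> linarith [hθ i, hθ a]
  · rw [V_apply θ ham, if_neg ham.ne', if_pos rfl]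
    omega
  · rw [V_apply θ ham, if_neg (ham.trans hk).ne', if_neg hk.ne', if_pos hk]

theorem W_mem (a : Fin d) : W θ a ∈ pts θ := by
  have ha := (hθ a).trans (le_bsum hθ a)
  refine mem_pts_of_sum_lt (fun i => ?_) (by rw [sum_W]; omega)
  simp only [W, Pi.single_apply]
  split_ifs <;> omega

theorem zero_mem : (0 : Fin d → ℤ) ∈ pts θ := by
  obtain rfl | hd := Nat.eq_zero_or_pos d
  · exact ⟨fun _ => le_rfl, Or.inr ⟨by simp, Or.inl (Subsingleton.elim _ _)⟩⟩
  refine mem_pts_of_sum_lt (fun _ => le_rfl) ?_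
  simpa using zero_lt_one.trans_le ((hθ ⟨0, hd⟩).trans (le_bsum hθ _))

end Vertices

def powWeight (b : ℤ) : Fin d → ℤ := fun k => (b + 1) ^ (k : ℕ)

theorem sum_pow_mul_le {b : ℤ} (hb : 0 ≤ b) (s : Finset (Fin d)) {n : ℕ}
    (hs : ∀ k ∈ s, (k : ℕ) < n) (z : Fin d → ℤ) (hz : ∀ k ∈ s, z k ≤ b) :
    ∑ k ∈ s, (b + 1) ^ (k : ℕ) * z k ≤ (b + 1) ^ n - 1 :=
  calc ∑ k ∈ s, (b + 1) ^ (k : ℕ) * z k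
      ≤ ∑ k ∈ s, (b + 1) ^ (k : ℕ) * b :=
        sum_le_sum fun k hk => mul_le_mul_of_nonneg_left (hz k hk) (by positivity)
    _ = (∑ j ∈ s.map Fin.valEmbedding, (b + 1) ^ j) * b := by rw [sum_map, sum_mul]; rfl
    _ ≤ (∑ j ∈ range n, (b + 1) ^ j) * b := by
        gcongr
        intro j hj
        simp only [mem_map, Fin.valEmbedding_apply] at hj
        obtain ⟨k, hk, rfl⟩ := hj
        exact mem_range.mpr (hs k hk)
    _ = (b + 1) ^ n - 1 := by simpa using geom_sum_mul (b + 1) n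

theorem powWeight_dotProduct_lt {b : ℤ} (hb : 0 ≤ b) {x y : Fin d → ℤ} (hx : ∀ k, 0 ≤ x k)
    (hy : ∀ k, y k ≤ b) (i : Fin d) (hi : y i < x i) (habove : ∀ k, i < k → x k = y k) :
    powWeight b ⬝ᵥ y < powWeight b ⬝ᵥ x := by
  rw [← sub_pos, ← dotProduct_sub]
  have hlow := sum_pow_mul_le hb (Iio i) (n := i) (fun k hk => by simpa using hk) (y - x)
    fun k _ => by simp only [Pi.sub_apply]; linarith [hx k, hy k]
  have htop : (b + 1) ^ (i : ℕ) ≤ (b + 1) ^ (i : ℕ) * (x - y) i :=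
    le_mul_of_one_le_right (by positivity) (by simp only [Pi.sub_apply]; omega)
  have hsplit : powWeight b ⬝ᵥ (x - y) =
      ∑ k ∈ Iio i, (b + 1) ^ (k : ℕ) * (x - y) k + (b + 1) ^ (i : ℕ) * (x - y) i := by
    rw [sum_Iio_add_eq_sum_Iic (f := fun k : Fin d => (b + 1) ^ (k : ℕ) * (x - y) k), dotProduct,
      ← sum_subset (subset_univ _)]
    · rfl
    · intro k _ hk
      simp [habove k (not_le.mp (by simpa using hk))]
  have hneg : ∑ k ∈ Iio i, (b + 1) ^ (k : ℕ) * (x - y) k =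
      -∑ k ∈ Iio i, (b + 1) ^ (k : ℕ) * (y - x) k := by
    rw [← sum_neg_distrib]
    exact sum_congr rfl fun k _ => by simp only [Pi.sub_apply]; ring
  rw [hsplit, hneg]
  linarith

theorem isExposedPoint_of_dotProduct_lt_on_top_level {p w : Fin d → ℤ} (hw : ∀ i, 0 ≤ w i)
    (hp : p ∈ pts θ) (hps : ∑ i, p i = bsum θ)
    (hmin : ∀ x ∈ pts θ, ∑ i, x i = bsum θ → x ≠ p → w ⬝ᵥ p < w ⬝ᵥ x) :
    IsExposedPoint (pts θ) p := by
  refine ⟨hp, (w ⬝ᵥ p + 1) • 1 - w, fun x hx hne => ?_⟩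
  simp only [sub_dotProduct, smul_dotProduct, one_dotProduct, smul_eq_mul]
  have hwx : 0 ≤ w ⬝ᵥ x := sum_nonneg fun i _ => mul_nonneg (hw i) (hx.1 i)
  have hwp : 0 ≤ w ⬝ᵥ p := sum_nonneg fun i _ => mul_nonneg (hw i) (hp.1 i)
  rcases (sum_le_of_mem_pts hx).lt_or_eq with hlt | heq
  · nlinarith
  · rw [heq, hps]
    linarith [hmin x hx heq hne]

theorem isExposedPoint_of_powWeight_lt {p : Fin d → ℤ} (hp : p ∈ pts θ)
    (hps : ∑ i, p i = bsum θ) (F : Finset (Fin d)) (hpF : ∀ i ∈ F, p i = 0)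
    (hmin : ∀ x ∈ pts θ, ∑ i, x i = bsum θ → (∀ i ∈ F, x i = 0) → x ≠ p →
      powWeight (bsum θ) ⬝ᵥ p < powWeight (bsum θ) ⬝ᵥ x) :
    IsExposedPoint (pts θ) p := by
  set b := bsum θ
  have hb : 0 ≤ b := hps ▸ sum_nonneg fun i _ => hp.1 i
  set N := (b + 1) ^ d
  set penalty : Fin d → ℤ := fun i => if i ∈ F then N else 0
  have hpen0 : ∀ i, 0 ≤ penalty i := fun i => by simp only [penalty]; split_ifs <;> positivity
  have hφ0 : ∀ i, 0 ≤ powWeight (d := d) b i := fun i => by simp only [powWeight]; positivity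
  have hpen : ∀ x : Fin d → ℤ, (∀ i ∈ F, x i = 0) → penalty ⬝ᵥ x = 0 := fun x hx =>
    sum_eq_zero fun i _ => by by_cases hi : i ∈ F <;> simp [penalty, hi, hx]
  have hφp : powWeight b ⬝ᵥ p < N := by
    have := sum_pow_mul_le hb univ (fun k _ => k.isLt) p fun k _ => le_bsum_of_mem_pts hp k
    exact lt_of_le_of_lt this (by omega)
  refine isExposedPoint_of_dotProduct_lt_on_top_level (w := penalty + powWeight b)
    (fun i => add_nonneg (hpen0 i) (hφ0 i)) hp hps fun x hx hxs hne => ?_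
  rw [add_dotProduct, add_dotProduct, hpen p hpF, zero_add]
  by_cases hxF : ∀ i ∈ F, x i = 0
  · rw [hpen x hxF, zero_add]
    exact hmin x hx hxs hxF hne
  push Not at hxF
  obtain ⟨i, hiF, hxi⟩ := hxF
  have hxi : 1 ≤ x i := by have := hx.1 i; omega
  have hN : N ≤ penalty ⬝ᵥ x :=
    calc N ≤ penalty i * x i := by
          simp only [penalty, if_pos hiF]
          exact le_mul_of_one_le_right (by positivity) (by omega)
      _ ≤ penalty ⬝ᵥ x := single_le_sum (f := fun j => penalty j * x j)
          (fun j _ => mul_nonneg (hpen0 j) (hx.1 j)) (mem_univ i)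
  have hφx : 0 ≤ powWeight b ⬝ᵥ x := sum_nonneg fun j _ => mul_nonneg (hφ0 j) (hx.1 j)
  linarith

section Exposed

variable (hθ : ∀ i, 1 ≤ θ i)
include hθ

theorem isExposedPoint_zero : IsExposedPoint (pts θ) 0 := by
  refine ⟨zero_mem hθ, fun _ => -1, fun x hx hne => ?_⟩
  obtain ⟨i, hi⟩ := Function.ne_iff.mp hne
  have hpos : 0 < ∑ j, x j :=
    sum_pos' (fun j _ => hx.1 j) ⟨i, mem_univ i, lt_of_le_of_ne (hx.1 i) (Ne.symm hi)⟩
  simpa [dotProduct] using hpos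

theorem isExposedPoint_W {a : Fin d} (ha : (a : ℕ) + 2 ≤ d) : IsExposedPoint (pts θ) (W θ a) := by
  refine ⟨W_mem hθ a, Pi.single a 2 - 1, fun x hx hne => ?_⟩
  have hWa : W θ a a = bsum θ - 1 := by simp [W]
  rw [sub_dotProduct, sub_dotProduct, single_dotProduct, single_dotProduct, one_dotProduct,
    one_dotProduct, sum_W, hWa]
  have hrest := add_sum_erase univ x (mem_univ a)
  have hrest0 : 0 ≤ ∑ k ∈ univ.erase a, x k := sum_nonneg fun k _ => hx.1 k
  by_contra hge
  have hzero : ∑ k ∈ univ.erase a, x k = 0 := by linarith [sum_le_of_mem_pts hx]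
  have hoff : ∀ k, k ≠ a → x k = 0 := fun k hk =>
    (sum_eq_zero_iff_of_nonneg fun j _ => hx.1 j).mp hzero k (mem_erase.mpr ⟨hk, mem_univ k⟩)
  rcases (show ∑ k, x k = bsum θ - 1 ∨ ∑ k, x k = bsum θ by
    have := sum_le_of_mem_pts hx; omega) with hs | hs
  · exact hne (eq_W_of hs hoff)
  · let last : Fin d := ⟨d - 1, by omega⟩
    have hlast := le_apply_of_lexLe (lexLe_of_mem_pts hx hs) last
      fun j hj => absurd hj (by simp only [last, Fin.lt_def]; omega)
    rw [hoff last (by simp only [last, ne_eq, Fin.ext_iff]; omega)] at hlast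
    linarith [hθ last]

theorem isExposedPoint_U (m : Fin d) : IsExposedPoint (pts θ) (U θ m) := by
  refine isExposedPoint_of_powWeight_lt (U_mem hθ m) (sum_U θ m) (Finset.Iio m)
    (fun i hi => ?_) fun x hx hs hF hne => ?_
  · rw [U_apply, if_neg (mem_Iio.mp hi).ne, if_neg (not_lt.mpr (mem_Iio.mp hi).le)]
  have hb : 0 ≤ bsum θ := hs ▸ sum_nonneg fun i _ => hx.1 i
  rcases eq_above_or_witness_above_of_lexLe (lexLe_of_mem_pts hx hs) m with
    habove | ⟨i, hmi, hi, habove⟩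
  · exact absurd (eq_U_of hs (fun k hk => hF k (mem_Iio.mpr hk)) habove) hne
  have hU : ∀ k, m < k → U θ m k = θ k := fun k hk => by rw [U_apply, if_neg hk.ne', if_pos hk]
  refine powWeight_dotProduct_lt hb hx.1 (le_bsum_of_mem_pts (U_mem hθ m)) i ?_ ?_
  · rwa [hU i hmi]
  · exact fun k hk => by rw [habove k hk, hU k (hmi.trans hk)]

theorem isExposedPoint_V {a m : Fin d} (ham : (a : ℕ) + 2 ≤ m) :
    IsExposedPoint (pts θ) (V θ a m) := by
  have ham' : a < m := by rw [Fin.lt_def]; omega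
  refine isExposedPoint_of_powWeight_lt (V_mem hθ ham') (sum_V θ a m) ((Finset.Iio m).erase a)
    (fun i hi => ?_) fun x hx hs hF hne => ?_
  · obtain ⟨hia, him⟩ := mem_erase.mp hi
    rw [V_apply θ ham', if_neg hia, if_neg (mem_Iio.mp him).ne,
      if_neg (not_lt.mpr (mem_Iio.mp him).le)]
  have hb : 0 ≤ bsum θ := hs ▸ sum_nonneg fun i _ => hx.1 i
  have hlex := lexLe_of_mem_pts hx hs
  have hV : ∀ k, m < k → V θ a m k = θ k := fun k hk => by
    rw [V_apply θ ham', if_neg (ham'.trans hk).ne', if_neg hk.ne', if_pos hk]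
  have hVle := le_bsum_of_mem_pts (V_mem hθ ham')
  -- `x` vanishes at `m - 1`, so its witness against `θ` lies at `m` or above
  let m' : Fin d := ⟨m - 1, by omega⟩
  have hxm' : x m' = 0 := hF m' <| mem_erase.mpr
    ⟨by simp only [m', ne_eq, Fin.ext_iff]; omega, mem_Iio.mpr (Fin.mk_lt_of_lt_val (by omega))⟩
  rcases eq_above_or_witness_above_of_lexLe hlex m' with habove | ⟨i, hmi, hi, habove⟩
  · linarith [le_apply_of_lexLe hlex m' habove, hθ m']
  have hmi : m ≤ i := by simp only [m', Fin.lt_def] at hmi; rw [Fin.le_def]; omega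
  rcases hmi.lt_or_eq with hmi | rfl
  · refine powWeight_dotProduct_lt hb hx.1 hVle i (by rwa [hV i hmi]) fun k hk => ?_
    rw [habove k hk, hV k (hmi.trans hk)]
  have hVm : V θ a m m = θ m + 1 := by rw [V_apply θ ham', if_neg ham'.ne', if_pos rfl]
  rcases (show V θ a m m ≤ x m by omega).lt_or_eq with hlt | heq
  · refine powWeight_dotProduct_lt hb hx.1 hVle m hlt fun k hk => ?_
    rw [habove k hk, hV k hk]
  · refine absurd (eq_V_of ham' hs (fun k hk hka => ?_) (by omega) habove) hne
    exact hF k (mem_erase.mpr ⟨hka, mem_Iio.mpr hk⟩)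

theorem isExposedPoint_of_mem_vertices (hx : x ∈ vertices θ) : IsExposedPoint (pts θ) x := by
  rcases hx with ((rfl | ⟨m, rfl⟩) | ⟨a, m, h, rfl⟩) | ⟨a, h, rfl⟩
  exacts [isExposedPoint_zero hθ, isExposedPoint_U hθ m, isExposedPoint_V hθ h,
    isExposedPoint_W hθ h]

end Exposed

section Classification

def move (i j : Fin d) : Fin d → ℤ := Pi.single i 1 - Pi.single j 1

theorem move_apply (i j k : Fin d) :
    move i j k = (if k = i then 1 else 0) - if k = j then 1 else 0 := by
  simp [move, Pi.single_apply]

theorem sum_add_move (x : Fin d → ℤ) (i j : Fin d) : ∑ k, (x + move i j) k = ∑ k, x k := by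
  simp [move, sum_add_distrib, sum_sub_distrib]

theorem sum_sub_move (x : Fin d → ℤ) (i j : Fin d) : ∑ k, (x - move i j) k = ∑ k, x k := by
  simp [move, sum_sub_distrib]

theorem sub_move (x : Fin d → ℤ) (i j : Fin d) : x - move i j = x + move j i := by
  ext k
  simp only [Pi.sub_apply, Pi.add_apply, move_apply]
  ring

theorem move_ne_zero {i j : Fin d} (h : i ≠ j) : move i j ≠ 0 := fun h0 => by
  simpa [move_apply, h] using congrFun h0 i

theorem single_mem_pts {i : Fin d} {t : ℤ} (h0 : 0 ≤ t) (ht : t < bsum θ) :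
    Pi.single i t ∈ pts θ :=
  mem_pts_of_sum_lt (fun k => by by_cases hk : k = i <;> simp [hk, h0]) (by simpa using ht)

theorem add_move_mem_pts (h0 : ∀ k, 0 ≤ x k) (hs : ∑ k, x k = bsum θ) {i j m : Fin d}
    (hi : i ≤ m) (hj : j ≤ m) (hxj : 1 ≤ x j) (hm : θ m < x m + move i j m)
    (habove : ∀ k, m < k → x k = θ k) : x + move i j ∈ pts θ := by
  refine mem_pts_of_witness (fun k => ?_) (by rw [sum_add_move, hs]) m hm fun k hk => ?_
  · have := h0 k
    simp only [Pi.add_apply, move_apply]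
    split_ifs <;> subst_vars <;> omega
  · rw [Pi.add_apply, move_apply, if_neg (hi.trans_lt hk).ne', if_neg (hj.trans_lt hk).ne',
      habove k hk, sub_zero, add_zero]

theorem isProperMidpoint_of_move (h0 : ∀ k, 0 ≤ x k) (hs : ∑ k, x k = bsum θ) {i j m : Fin d}
    (hij : i ≠ j) (hi : i ≤ m) (hj : j ≤ m) (hxi : 1 ≤ x i) (hxj : 1 ≤ x j)
    (hm₁ : θ m < x m + move i j m) (hm₂ : θ m < x m + move j i m)
    (habove : ∀ k, m < k → x k = θ k) : IsProperMidpoint (pts θ) x :=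
  ⟨move i j, move_ne_zero hij, add_move_mem_pts h0 hs hi hj hxj hm₁ habove,
    sub_move x i j ▸ add_move_mem_pts h0 hs hj hi hxi hm₂ habove⟩

variable (hθ : ∀ i, 1 ≤ θ i)
include hθ

theorem mem_vertices_or_isProperMidpoint_of_sum_lt (h0 : ∀ i, 0 ≤ x i)
    (hs : ∑ i, x i < bsum θ) :
    x ∈ vertices θ ∨ IsProperMidpoint (pts θ) x := by
  by_cases hx0 : x = 0
  · exact Or.inl (hx0 ▸ zero_mem_vertices θ)
  obtain ⟨i, hi⟩ : ∃ i, x i ≠ 0 := not_forall.mp fun h => hx0 (funext h)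
  have hi : 1 ≤ x i := by have := h0 i; omega
  by_cases hpair : ∃ j, j ≠ i ∧ x j ≠ 0
  · obtain ⟨j, hji, hj⟩ := hpair
    have hj : 1 ≤ x j := by have := h0 j; omega
    refine Or.inr ⟨move i j, move_ne_zero hji.symm, mem_pts_of_sum_lt (fun k => ?_)
      (by rwa [sum_add_move]), mem_pts_of_sum_lt (fun k => ?_) (by rwa [sum_sub_move])⟩
    all_goals
      have := h0 k
      simp only [Pi.add_apply, Pi.sub_apply, move_apply]
      split_ifs <;> subst_vars <;> omega
  push Not at hpair
  have hx : x = Pi.single i (x i) := funext fun k => by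
    by_cases hk : k = i
    · subst hk; simp
    · simp [hk, hpair k hk]
  have hsum : ∑ k, x k = x i := by rw [hx]; simp
  have hsingle : Pi.single i 1 ≠ (0 : Fin d → ℤ) := fun h => by simpa using congrFun h i
  rw [hx]
  rcases (show x i ≤ bsum θ - 2 ∨ x i = bsum θ - 1 by omega) with hle | heq
  · refine Or.inr ⟨Pi.single i 1, hsingle, ?_, ?_⟩
    · rw [← Pi.single_add]; refine single_mem_pts ?_ ?_ <;> omega
    · rw [← Pi.single_sub]; refine single_mem_pts ?_ ?_ <;> omega
  by_cases hid : (i : ℕ) + 2 ≤ d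
  · exact Or.inl (by rw [heq]; exact W_mem_vertices θ hid)
  refine Or.inr ⟨Pi.single i 1, hsingle, ?_, ?_⟩
  · have hU : Pi.single i (x i) + Pi.single i 1 = U θ i := by
      refine eq_U_of ?_ (fun k hk => by simp [hk.ne]) fun k hk => absurd hk ?_
      · simp only [← Pi.single_add, sum_pi_single', Finset.mem_univ, if_true]
        omega
      · rw [Fin.lt_def]; omega
    rw [hU]; exact U_mem hθ i
  · rw [← Pi.single_sub]; refine single_mem_pts ?_ ?_ <;> omega

theorem mem_vertices_or_isProperMidpoint_of_sum_eq (hx : x ∈ pts θ)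
    (hs : ∑ i, x i = bsum θ) :
    x ∈ vertices θ ∨ IsProperMidpoint (pts θ) x := by
  obtain rfl | hd := Nat.eq_zero_or_pos d
  · exact Or.inl (Subsingleton.elim 0 x ▸ zero_mem_vertices θ)
  obtain rfl | ⟨m, hm, habove⟩ := lexLe_of_mem_pts hx hs
  · left
    convert U_mem_vertices θ ⟨0, hd⟩ using 1
    exact (U_zero θ hd).symm
  replace habove : ∀ k, m < k → x k = θ k := fun k hk => (habove k hk).symm
  by_cases hzero : ∀ k, k < m → x k = 0
  · exact Or.inl ((eq_U_of hs hzero habove) ▸ U_mem_vertices θ m)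
  push Not at hzero
  obtain ⟨a, ham, ha⟩ := hzero
  have ha : 1 ≤ x a := by have := hx.1 a; omega
  by_cases hpair : ∃ j, j < m ∧ j ≠ a ∧ x j ≠ 0
  · obtain ⟨j, hjm, hja, hj⟩ := hpair
    have hj : 1 ≤ x j := by have := hx.1 j; omega
    have hmove : ∀ i j : Fin d, i < m → j < m → move i j m = 0 := fun i j hi hj => by
      rw [move_apply, if_neg hi.ne', if_neg hj.ne', sub_zero]
    refine Or.inr (isProperMidpoint_of_move hx.1 hs hja.symm ham.le hjm.le ha hj ?_ ?_ habove)
    · rw [hmove a j ham hjm, add_zero]; exact hm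
    · rw [hmove j a hjm ham, add_zero]; exact hm
  push Not at hpair
  have hmove₁ : move m a m = 1 := by rw [move_apply, if_pos rfl, if_neg ham.ne', sub_zero]
  have hmove₂ : move a m m = -1 := by rw [move_apply, if_neg ham.ne', if_pos rfl, zero_sub]
  rcases (show θ m + 2 ≤ x m ∨ x m = θ m + 1 by omega) with hxm | hxm
  · have := hθ m
    exact Or.inr (isProperMidpoint_of_move hx.1 hs ham.ne' le_rfl ham.le (by omega) ha (by omega)
      (by omega) habove)
  by_cases h2 : (a : ℕ) + 2 ≤ m
  · exact Or.inl ((eq_V_of ham hs hpair hxm habove) ▸ V_mem_vertices θ h2)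
  -- here `m = a + 1`, and moving a unit from `m` to `a` lands on `U θ a`
  have hU : x + move a m = U θ a := by
    refine eq_U_of (by rw [sum_add_move, hs]) (fun k hk => ?_) fun k hk => ?_
    · rw [Pi.add_apply, move_apply, if_neg hk.ne, if_neg (hk.trans ham).ne,
        hpair k (hk.trans ham) hk.ne]
      ring
    · rcases (show k = m ∨ m < k by rw [Fin.lt_def] at hk ⊢; rw [Fin.ext_iff]; omega)
        with rfl | hmk
      · rw [Pi.add_apply, hmove₂]; omega
      · rw [Pi.add_apply, move_apply, if_neg (hk.ne'), if_neg hmk.ne', habove k hmk]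
        ring
  refine Or.inr ⟨move m a, move_ne_zero ham.ne',
    add_move_mem_pts hx.1 hs le_rfl ham.le ha (by omega) habove, ?_⟩
  rw [sub_move, hU]
  exact U_mem hθ a

end Classification

theorem extremePoints_convexHull_pts (hθ : ∀ i, 1 ≤ θ i) :
    (convexHull ℝ (toR '' pts θ)).extremePoints ℝ = toR '' vertices θ := by
  refine Subset.antisymm (fun p hp => ?_) ?_
  · obtain ⟨x, hx, rfl⟩ := extremePoints_convexHull_subset hp
    rcases (sum_le_of_mem_pts hx).lt_or_eq with hs | hs
    · rcases mem_vertices_or_isProperMidpoint_of_sum_lt hθ hx.1 hs with hv | hmid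
      · exact ⟨x, hv, rfl⟩
      · exact absurd hp (toR_not_mem_extremePoints_of_isProperMidpoint hmid)
    · rcases mem_vertices_or_isProperMidpoint_of_sum_eq hθ hx hs with hv | hmid
      · exact ⟨x, hv, rfl⟩
      · exact absurd hp (toR_not_mem_extremePoints_of_isProperMidpoint hmid)
  · rintro _ ⟨x, hx, rfl⟩
    exact toR_mem_extremePoints_of_isExposedPoint (isExposedPoint_of_mem_vertices hθ hx)

section Indexing

variable (θ)

theorem uQ_eq_U (m : Fin d) : uQ d θ (m + 2) = U θ m := by
  ext i
  simp only [uQ, U_apply, Nat.add_sub_cancel, Fin.ext_iff, Fin.lt_def]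
  split_ifs <;> first | rfl | omega

theorem vQ_eq_V {a m : Fin d} (ham : a < m) : vQ d θ (a + 1) (m + 1) = V θ a m := by
  ext i
  simp only [vQ, V_apply θ ham, Nat.add_sub_cancel, Fin.ext_iff, Fin.lt_def]
  split_ifs <;> first | rfl | omega

theorem vQ_eq_W (a : Fin d) : vQ d θ (a + 1) (d + 1) = W θ a := by
  ext i
  simp only [vQ, W, Pi.single_apply, Nat.add_sub_cancel, btil_of_le θ le_rfl, Fin.ext_iff]
  split_ifs <;> first | rfl | omega

theorem uQ_two : uQ d θ 2 = θ := by
  obtain rfl | hd := Nat.eq_zero_or_pos d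
  · exact Subsingleton.elim _ _
  exact (uQ_eq_U θ ⟨0, hd⟩).trans (U_zero θ hd)

theorem uQ_top : uQ d θ (d + 1) = fun i : Fin d => if (i : ℕ) = d - 1 then bsum θ else 0 := by
  ext i
  simp only [uQ, Nat.add_sub_cancel, show d + 1 - 2 = d - 1 by omega, btil_of_le θ le_rfl]
  split_ifs <;> first | rfl | omega

theorem vQ_top (j : ℕ) :
    vQ d θ j (d + 1) = fun i : Fin d => if (i : ℕ) = j - 1 then bsum θ - 1 else 0 := by
  ext i
  simp only [vQ, Nat.add_sub_cancel, btil_of_le θ le_rfl]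
  split_ifs <;> first | rfl | omega

theorem image_vertices :
    toR '' vertices θ = {(0 : Fin d → ℝ)} ∪
      {p | ∃ k : ℕ, 2 ≤ k ∧ k ≤ d + 1 ∧ p = toR (uQ d θ k)} ∪
      {p | ∃ j k : ℕ, 1 ≤ j ∧ j < k - 1 ∧ k - 1 ≤ d ∧ p = toR (vQ d θ j k)} := by
  have htoR0 : toR (0 : Fin d → ℤ) = 0 := by ext; simp [toR]
  ext p
  constructor
  · rintro ⟨x, ((rfl | ⟨m, rfl⟩) | ⟨a, m, h, rfl⟩) | ⟨a, h, rfl⟩, rfl⟩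
    · exact Or.inl (Or.inl htoR0)
    · exact Or.inl (Or.inr ⟨m + 2, by omega, by omega, by rw [uQ_eq_U]⟩)
    · refine Or.inr ⟨a + 1, m + 1, by omega, by omega, by omega, ?_⟩
      rw [vQ_eq_V θ (by rw [Fin.lt_def]; omega)]
    · exact Or.inr ⟨a + 1, d + 1, by omega, by omega, by omega, by rw [vQ_eq_W]⟩
  · rintro ((rfl | ⟨k, hk2, hkd, rfl⟩) | ⟨j, k, hj, hjk, hkd, rfl⟩)
    · exact ⟨0, zero_mem_vertices θ, htoR0⟩
    · obtain ⟨m, rfl⟩ : ∃ m, k = m + 2 := ⟨k - 2, by omega⟩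
      exact ⟨_, U_mem_vertices θ ⟨m, by omega⟩, by rw [← uQ_eq_U]⟩
    · obtain ⟨a, rfl⟩ : ∃ a, j = a + 1 := ⟨j - 1, by omega⟩
      obtain ⟨m, rfl⟩ : ∃ m, k = m + 1 := ⟨k - 1, by omega⟩
      rcases (show m < d ∨ m = d by omega) with hmd | rfl
      · refine ⟨_, V_mem_vertices θ (a := ⟨a, by omega⟩) (m := ⟨m, hmd⟩) (by simp; omega), ?_⟩
        rw [← vQ_eq_V θ (by rw [Fin.lt_def]; simp; omega)]
      · exact ⟨_, W_mem_vertices θ (a := ⟨a, by omega⟩) (by simp; omega), by rw [← vQ_eq_W]⟩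

end Indexing

end GrevlexQ

theorem grevlexQ_extremePoints_general (d : ℕ) (θ : Fin d → ℤ) (hθ : ∀ i, 1 ≤ θ i) :
    (grevlexQ d θ).extremePoints ℝ =
        {(0 : Fin d → ℝ)} ∪
          {p | ∃ k : ℕ, 2 ≤ k ∧ k ≤ d + 1 ∧ p = toR (uQ d θ k)} ∪
          {p | ∃ j k : ℕ, 1 ≤ j ∧ j < k - 1 ∧ k - 1 ≤ d ∧ p = toR (vQ d θ j k)} ∧
      uQ d θ 2 = θ ∧
      uQ d θ (d + 1) = (fun i : Fin d => if (i : ℕ) = d - 1 then bsum θ else 0) ∧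
      (∀ j : ℕ, 1 ≤ j → j ≤ d - 1 →
        vQ d θ j (d + 1) = fun i : Fin d => if (i : ℕ) = j - 1 then bsum θ - 1 else 0) := by
  refine ⟨?_, GrevlexQ.uQ_two θ, GrevlexQ.uQ_top θ, fun j _ _ => GrevlexQ.vQ_top θ j⟩
  rw [GrevlexQ.grevlexQ_eq, GrevlexQ.extremePoints_convexHull_pts hθ, GrevlexQ.image_vertices]

/-- The vertices of the grevlex polytope `Q` are exactly `0`, the points
`u^k` for `2 ≤ k ≤ d+1`, and the points `v^{j,k}` for `1 ≤ j < k-1 ≤ d`; in particular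
`u^2 = θ`, `u^{d+1} = b·e_d`, and `v^{j,d+1} = (b-1)e_j`. -/
theorem grevlexQ_extremePoints (d : ℕ) (hd : 3 ≤ d) (θ : Fin d → ℤ) (hθ : ∀ i, 1 ≤ θ i) :
    (grevlexQ d θ).extremePoints ℝ =
        {(0 : Fin d → ℝ)} ∪
          {p | ∃ k : ℕ, 2 ≤ k ∧ k ≤ d + 1 ∧ p = toR (uQ d θ k)} ∪
          {p | ∃ j k : ℕ, 1 ≤ j ∧ j < k - 1 ∧ k - 1 ≤ d ∧ p = toR (vQ d θ j k)} ∧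
      uQ d θ 2 = θ ∧
      uQ d θ (d + 1) = (fun i : Fin d => if (i : ℕ) = d - 1 then bsum θ else 0) ∧
      (∀ j : ℕ, 1 ≤ j → j ≤ d - 1 →
        vQ d θ j (d + 1) = fun i : Fin d => if (i : ℕ) = j - 1 then bsum θ - 1 else 0) :=
  grevlexQ_extremePoints_general d θ hθ
end
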